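/- arXiv:2303.17931 — 7 statements merged into one kernel-verified Lean document; each statement's English description precedes it below -/
import Mathlib

section
/- The number of permutations of {1,2,...,n} whose disjoint cycle decomposition contains exactly k adjacent q-cycles equals \sum_{j=k}^{\lfloor n/q \rfloor} (-1)^{k+j} \binom{j}{k} (n-(q-1)j)!/j!. -/
/-!
Write `A(π)` for the set of starting points of the adjacent `q`-cycles of `π`. By binomial
inversion, the number of `π` with `|A(π)| = k` is `∑ⱼ (-1)^(k+j) C(j,k) ∑_π C(|A(π)|, j)`, and
`∑_π C(|A(π)|, j)` counts the pairs `(π, S)` with `S ⊆ A(π)`, `|S| = j`. Such an `S` is the set of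
left endpoints of `j` disjoint blocks `[i, i + q)` in `[0, n)`; there are `C(n - (q-1)j, j)` of
these, and the permutations having all `j` prescribed cycles are the permutations of the remaining
`n - qj` points. Finally `C(n - (q-1)j, j) (n - qj)! = (n - (q-1)j)! / j!`.
-/

/-- `IsAdjCycle q π i` says that (in 0-indexed terms) the cycle
`(i, i+1, …, i+q-1)` occurs in the disjoint cycle decomposition of `π`. -/
def IsAdjCycle {n : ℕ} (q : ℕ) (π : Equiv.Perm (Fin n)) (i : ℕ) : Prop :=
  i + q ≤ n ∧
  (∀ j : Fin n, i ≤ (j : ℕ) → (j : ℕ) + 1 < i + q → ((π j : ℕ) = (j : ℕ) + 1)) ∧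
  (∀ j : Fin n, (j : ℕ) = i + q - 1 → (π j : ℕ) = i)

open Finset
open scoped Nat

instance {n : ℕ} (q : ℕ) (π : Equiv.Perm (Fin n)) (i : ℕ) : Decidable (IsAdjCycle q π i) := by
  unfold IsAdjCycle; infer_instance

/-- `S` is the set of left endpoints of pairwise disjoint blocks `[i, i + q)` inside `[0, n)`. -/
def IsPacking (q n : ℕ) (S : Finset ℕ) : Prop :=
  (∀ i ∈ S, i + q ≤ n) ∧ ∀ i ∈ S, ∀ i' ∈ S, i < i' → i + q ≤ i'

instance (q n : ℕ) (S : Finset ℕ) : Decidable (IsPacking q n S) := by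
  unfold IsPacking; infer_instance

def packings (q n j : ℕ) : Finset (Finset ℕ) :=
  {S ∈ (range n).powersetCard j | IsPacking q n S}

section Packings

variable {q : ℕ} (hq : 0 < q)
include hq

lemma mem_packings {n j : ℕ} {S : Finset ℕ} : S ∈ packings q n j ↔ IsPacking q n S ∧ #S = j := by
  simp only [packings, mem_filter, mem_powersetCard]
  refine ⟨fun ⟨⟨_, hcard⟩, hS⟩ => ⟨hS, hcard⟩, fun ⟨hS, hcard⟩ => ⟨⟨fun i hi => ?_, hcard⟩, hS⟩⟩
  have := hS.1 i hi
  exact mem_range.2 (by omega)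

lemma isPacking_insert_iff {m : ℕ} {S : Finset ℕ} (hm : m ∉ S) :
    IsPacking q (m + q) (insert m S) ↔ IsPacking q m S := by
  constructor
  · rintro ⟨hle, hsep⟩
    have hlt : ∀ i ∈ S, i < m := fun i hi => by
      have := hle i (mem_insert_of_mem hi)
      have : i ≠ m := fun h => hm (h ▸ hi)
      omega
    exact ⟨fun i hi => hsep i (mem_insert_of_mem hi) m (mem_insert_self m S) (hlt i hi),
      fun i hi i' hi' => hsep i (mem_insert_of_mem hi) i' (mem_insert_of_mem hi')⟩
  · rintro ⟨hle, hsep⟩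
    refine ⟨fun i hi => ?_, fun i hi i' hi' hii' => ?_⟩
    · rcases mem_insert.1 hi with rfl | hi
      · rfl
      · have := hle i hi; omega
    rcases mem_insert.1 hi with rfl | hiS <;> rcases mem_insert.1 hi' with rfl | hiS'
    · omega
    · have := hle i' hiS'; omega
    · exact hle i hiS
    · exact hsep i hiS i' hiS' hii'

lemma isPacking_and_notMem_iff {m : ℕ} {S : Finset ℕ} :
    IsPacking q (m + q) S ∧ m ∉ S ↔ IsPacking q (m + q - 1) S := by
  constructor
  · rintro ⟨⟨hle, hsep⟩, hm⟩
    refine ⟨fun i hi => ?_, hsep⟩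
    have := hle i hi
    have : i ≠ m := fun h => hm (h ▸ hi)
    omega
  · rintro ⟨hle, hsep⟩
    exact ⟨⟨fun i hi => by have := hle i hi; omega, hsep⟩, fun hm => by have := hle m hm; omega⟩

lemma card_packings_add_succ (m j : ℕ) :
    #(packings q (m + q) (j + 1)) = #(packings q (m + q - 1) (j + 1)) + #(packings q m j) := by
  have hnot : {S ∈ packings q (m + q) (j + 1) | m ∉ S} = packings q (m + q - 1) (j + 1) := by
    ext S
    simp only [mem_filter, mem_packings hq, ← isPacking_and_notMem_iff hq]
    tauto
  have hmem : {S ∈ packings q (m + q) (j + 1) | m ∈ S} = (packings q m j).image (insert m) := by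
    ext S
    simp only [mem_filter, mem_image, mem_packings hq]
    constructor
    · rintro ⟨⟨hS, hcard⟩, hm⟩
      refine ⟨S.erase m, ⟨?_, ?_⟩, insert_erase hm⟩
      · rw [← isPacking_insert_iff hq (notMem_erase m S), insert_erase hm]
        exact hS
      · rw [card_erase_of_mem hm, hcard, Nat.add_sub_cancel]
    · rintro ⟨S, ⟨hS, hcard⟩, rfl⟩
      have hm : m ∉ S := fun hm => by have := hS.1 m hm; omega
      exact ⟨⟨(isPacking_insert_iff hq hm).2 hS, by rw [card_insert_of_notMem hm, hcard]⟩,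
        mem_insert_self m S⟩
  have hinj : Set.InjOn (insert m) (packings q m j : Set (Finset ℕ)) := by
    intro S hS T hT hST
    have hmS : m ∉ S := fun hm => by have := ((mem_packings hq).1 hS).1.1 m hm; omega
    have hmT : m ∉ T := fun hm => by have := ((mem_packings hq).1 hT).1.1 m hm; omega
    rw [← erase_insert hmS, ← erase_insert hmT, hST]
  rw [← card_filter_add_card_filter_not (fun S => m ∈ S), hnot, hmem, card_image_of_injOn hinj,
    add_comm]

theorem card_packings (n j : ℕ) : #(packings q n j) = (n - (q - 1) * j).choose j := by
  induction n using Nat.strong_induction_on generalizing j with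
  | _ n ih =>
  cases j with
  | zero =>
    rw [Nat.choose_zero_right, card_eq_one]
    refine ⟨∅, eq_singleton_iff_unique_mem.2 ⟨?_, fun S hS => ?_⟩⟩
    · exact (mem_packings hq).2 ⟨⟨by simp, by simp⟩, card_empty⟩
    · exact card_eq_zero.1 ((mem_packings hq).1 hS).2
  | succ j =>
    obtain hn | ⟨m, rfl⟩ : n < q ∨ ∃ m, n = m + q :=
      (lt_or_ge n q).imp_right fun h => ⟨n - q, by omega⟩
    · have hempty : packings q n (j + 1) = ∅ := by
        refine eq_empty_of_forall_notMem fun S hS => ?_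
        obtain ⟨hS, hcard⟩ := (mem_packings hq).1 hS
        obtain ⟨i, hi⟩ := card_pos.1 (by omega : 0 < #S)
        have := hS.1 i hi
        omega
      have : q * (j + 1) = (q - 1) * (j + 1) + (j + 1) := by
        rw [← Nat.succ_mul, Nat.succ_eq_add_one, Nat.sub_add_cancel hq]
      have : q ≤ q * (j + 1) := Nat.le_mul_of_pos_right q j.succ_pos
      rw [hempty, card_empty, Nat.choose_eq_zero_of_lt (by omega)]
    · rw [card_packings_add_succ hq, ih _ (by omega), ih _ (by omega)]
      have hsplit : (q - 1) * (j + 1) = (q - 1) * j + (q - 1) := by ring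
      obtain hle | hlt := le_or_gt ((q - 1) * j) m
      · rw [show m + q - (q - 1) * (j + 1) = m - (q - 1) * j + 1 by omega,
          show m + q - 1 - (q - 1) * (j + 1) = m - (q - 1) * j by omega, Nat.choose_succ_succ',
          add_comm]
      · have hj : j ≠ 0 := by rintro rfl; simp at hlt
        rw [show m + q - (q - 1) * (j + 1) = 0 by omega,
          show m + q - 1 - (q - 1) * (j + 1) = 0 by omega, show m - (q - 1) * j = 0 by omega,
          Nat.choose_eq_zero_of_lt (Nat.pos_of_ne_zero hj)]
        simp

end Packings

def blocks (q : ℕ) (S : Finset ℕ) : Finset ℕ := S.biUnion fun i => Ico i (i + q)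

lemma mem_blocks {q x : ℕ} {S : Finset ℕ} : x ∈ blocks q S ↔ ∃ i ∈ S, i ≤ x ∧ x < i + q := by
  simp [blocks]

section Blocks

variable {q n : ℕ} {S : Finset ℕ} (hS : IsPacking q n S)
include hS

lemma card_blocks : #(blocks q S) = q * #S := by
  have hdisj : (S : Set ℕ).PairwiseDisjoint fun i => Ico i (i + q) := by
    intro i hi i' hi' hne
    simp only [Function.onFun, disjoint_left, mem_Ico]
    intro x hx hx'
    rcases lt_or_gt_of_ne hne with h | h
    · have := hS.2 i hi i' hi' h; omega
    · have := hS.2 i' hi' i hi h; omega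
  simp [blocks, card_biUnion hdisj, mul_comm]

lemma blocks_subset_range : blocks q S ⊆ range n := by
  intro x hx
  obtain ⟨i, hi, -, hx⟩ := mem_blocks.1 hx
  have := hS.1 i hi
  exact mem_range.2 (by omega)

end Blocks

/-- On each block `[i, i + q)`, `i ∈ S`, this is the cycle `(i, i + 1, …, i + q - 1)`;
off the blocks it is the identity. -/
def blockRotate (q : ℕ) (S : Finset ℕ) (x : ℕ) : ℕ :=
  if q ≤ x + 1 ∧ x + 1 - q ∈ S then x + 1 - q else if x ∈ blocks q S then x + 1 else x

def blockRotateInv (q : ℕ) (S : Finset ℕ) (y : ℕ) : ℕ :=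
  if y ∈ S then y + q - 1 else if y ∈ blocks q S then y - 1 else y

section BlockRotate

variable {q n : ℕ} {S : Finset ℕ}

lemma blockRotate_of_lt (hS : IsPacking q n S) {i x : ℕ} (hi : i ∈ S) (hix : i ≤ x)
    (hx : x + 1 < i + q) : blockRotate q S x = x + 1 := by
  have hnot : ¬(q ≤ x + 1 ∧ x + 1 - q ∈ S) := fun ⟨hle, hmem⟩ => by
    have := hS.2 _ hmem _ hi (by omega)
    omega
  rw [blockRotate, if_neg hnot, if_pos (mem_blocks.2 ⟨i, hi, hix, by omega⟩)]

lemma blockRotate_last (hq : 0 < q) {i : ℕ} (hi : i ∈ S) : blockRotate q S (i + q - 1) = i := by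
  rw [blockRotate, if_pos ⟨by omega, by rwa [show i + q - 1 + 1 - q = i by omega]⟩]
  omega

lemma blockRotate_of_notMem (hq : 0 < q) {x : ℕ} (hx : x ∉ blocks q S) : blockRotate q S x = x := by
  rw [blockRotate, if_neg, if_neg hx]
  exact fun ⟨hle, hmem⟩ => hx (mem_blocks.2 ⟨_, hmem, by omega, by omega⟩)

variable (hq : 0 < q) (hS : IsPacking q n S)
include hq hS

lemma blockRotate_lt {x : ℕ} (hx : x < n) : blockRotate q S x < n := by
  by_cases hxS : x ∈ blocks q S
  · obtain ⟨i, hi, hix, hxi⟩ := mem_blocks.1 hxS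
    have := hS.1 i hi
    obtain hlt | rfl : x + 1 < i + q ∨ x = i + q - 1 := by omega
    · rw [blockRotate_of_lt hS hi hix hlt]; omega
    · rw [blockRotate_last hq hi]; omega
  · rwa [blockRotate_of_notMem hq hxS]

lemma blockRotateInv_blockRotate (x : ℕ) : blockRotateInv q S (blockRotate q S x) = x := by
  by_cases hxS : x ∈ blocks q S
  · obtain ⟨i, hi, hix, hxi⟩ := mem_blocks.1 hxS
    obtain hlt | rfl : x + 1 < i + q ∨ x = i + q - 1 := by omega
    · have hnot : x + 1 ∉ S := fun h => by have := hS.2 i hi _ h (by omega); omega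
      rw [blockRotate_of_lt hS hi hix hlt, blockRotateInv, if_neg hnot,
        if_pos (mem_blocks.2 ⟨i, hi, by omega, hlt⟩), Nat.add_sub_cancel]
    · rw [blockRotate_last hq hi, blockRotateInv, if_pos hi]
  · have hnot : x ∉ S := fun h => hxS (mem_blocks.2 ⟨x, h, le_rfl, by omega⟩)
    rw [blockRotate_of_notMem hq hxS, blockRotateInv, if_neg hnot, if_neg hxS]

end BlockRotate

theorem card_perm_forall_apply_eq {α : Type*} [Fintype α] [DecidableEq α] (p : α → Prop)
    [DecidablePred p] (σ : Equiv.Perm α) :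
    Fintype.card {π : Equiv.Perm α // ∀ x, p x → π x = σ x} = (Fintype.card {x // ¬p x})! := by
  have e : {π : Equiv.Perm α // ∀ x, p x → π x = σ x} ≃
      {ρ : Equiv.Perm α // ∀ x, ¬¬p x → ρ x = x} :=
    (Equiv.mulLeft σ⁻¹).subtypeEquiv fun π => by simp [Equiv.eq_symm_apply, eq_comm]
  rw [Fintype.card_congr (e.trans (Equiv.Perm.subtypeEquivSubtypePerm _).symm),
    Fintype.card_perm]

section AdjCycle

variable {n q : ℕ} {S : Finset ℕ} {π σ : Equiv.Perm (Fin n)}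

lemma IsAdjCycle.apply_eq_apply {i : ℕ} (hπ : IsAdjCycle q π i) (hσ : IsAdjCycle q σ i)
    {x : Fin n} (hix : i ≤ x) (hxi : (x : ℕ) < i + q) : π x = σ x := by
  apply Fin.ext
  obtain hlt | hlast : (x : ℕ) + 1 < i + q ∨ (x : ℕ) = i + q - 1 := by omega
  · rw [hπ.2.1 x hix hlt, hσ.2.1 x hix hlt]
  · rw [hπ.2.2 x hlast, hσ.2.2 x hlast]

lemma IsAdjCycle.of_apply_eq (hq : 0 < q) {i : ℕ} (hσ : IsAdjCycle q σ i)
    (h : ∀ x : Fin n, i ≤ x → (x : ℕ) < i + q → π x = σ x) : IsAdjCycle q π i := by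
  refine ⟨hσ.1, fun x hix hxi => ?_, fun x hx => ?_⟩
  · rw [h x hix (by omega)]; exact hσ.2.1 x hix hxi
  · rw [h x (by omega) (by omega)]; exact hσ.2.2 x hx

lemma IsAdjCycle.add_le_of_lt (hq : 0 < q) {i i' : ℕ} (h : IsAdjCycle q π i)
    (h' : IsAdjCycle q π i') (hii' : i < i') : i + q ≤ i' := by
  -- otherwise the last point `i + q - 1` of the first cycle lies in the second one,
  -- which sends it above `i`
  by_contra! hlt
  let x : Fin n := ⟨i + q - 1, by have := h.1; omega⟩
  have hxv : (x : ℕ) = i + q - 1 := rfl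
  have hx : (π x : ℕ) = i := h.2.2 x hxv
  obtain hmid | hlast : (x : ℕ) + 1 < i' + q ∨ (x : ℕ) = i' + q - 1 := by omega
  · have := h'.2.1 x (by omega) hmid; omega
  · have := h'.2.2 x hlast; omega

lemma isPacking_of_forall_isAdjCycle (hq : 0 < q) (h : ∀ i ∈ S, IsAdjCycle q π i) :
    IsPacking q n S :=
  ⟨fun i hi => (h i hi).1, fun i hi i' hi' => (h i hi).add_le_of_lt hq (h i' hi')⟩

lemma exists_perm_forall_isAdjCycle (hq : 0 < q) (hS : IsPacking q n S) :
    ∃ σ : Equiv.Perm (Fin n), ∀ i ∈ S, IsAdjCycle q σ i := by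
  let f : Fin n → Fin n := fun x => ⟨blockRotate q S x, blockRotate_lt hq hS x.2⟩
  have hinj : Function.Injective f := fun x y hxy => by
    have := congrArg (blockRotateInv q S ∘ Fin.val) hxy
    simpa [f, blockRotateInv_blockRotate hq hS, Fin.val_inj] using this
  refine ⟨Equiv.ofBijective f (Finite.injective_iff_bijective.1 hinj),
    fun i hi => ⟨hS.1 i hi, fun x hix hxi => ?_, fun x hx => ?_⟩⟩
  · exact blockRotate_of_lt hS hi hix hxi
  · change blockRotate q S x = i
    rw [hx]
    exact blockRotate_last hq hi

lemma forall_isAdjCycle_iff (hq : 0 < q) (hσ : ∀ i ∈ S, IsAdjCycle q σ i) :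
    (∀ i ∈ S, IsAdjCycle q π i) ↔ ∀ x : Fin n, (x : ℕ) ∈ blocks q S → π x = σ x := by
  constructor
  · intro hπ x hx
    obtain ⟨i, hi, hix, hxi⟩ := mem_blocks.1 hx
    exact (hπ i hi).apply_eq_apply (hσ i hi) hix hxi
  · intro h i hi
    exact (hσ i hi).of_apply_eq hq fun x hix hxi => h x (mem_blocks.2 ⟨i, hi, hix, hxi⟩)

theorem card_filter_forall_isAdjCycle (hq : 0 < q) (hS : IsPacking q n S) :
    #{π : Equiv.Perm (Fin n) | ∀ i ∈ S, IsAdjCycle q π i} = (n - q * #S)! := by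
  obtain ⟨σ, hσ⟩ := exists_perm_forall_isAdjCycle hq hS
  have hlt : ∀ x ∈ blocks q S, x < n := fun x hx => mem_range.1 (blocks_subset_range hS hx)
  have hblocks : Fintype.card {x : Fin n // (x : ℕ) ∈ blocks q S} = q * #S := by
    rw [← card_blocks hS, ← card_attachFin _ hlt, ← Fintype.card_coe]
    exact Fintype.card_congr (Equiv.subtypeEquivRight fun x => (mem_attachFin hlt).symm)
  have := card_perm_forall_apply_eq (fun x : Fin n => (x : ℕ) ∈ blocks q S) σ
  rw [Fintype.card_subtype_compl, hblocks, Fintype.card_fin, Fintype.card_subtype] at this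
  rw [filter_congr fun π _ => forall_isAdjCycle_iff hq hσ]
  exact this

end AdjCycle

theorem sum_Icc_neg_one_pow_mul_choose_mul_choose {k m M : ℕ} (hm : m ≤ M) :
    ∑ j ∈ Icc k M, (-1 : ℤ) ^ (k + j) * j.choose k * m.choose j = if m = k then 1 else 0 := by
  obtain hmk | hkm := lt_or_ge m k
  · rw [if_neg hmk.ne]
    refine sum_eq_zero fun j hj => ?_
    rw [Nat.choose_eq_zero_of_lt (hmk.trans_le (mem_Icc.1 hj).1), Nat.cast_zero, mul_zero]
  have hterm : ∀ d, (-1 : ℤ) ^ (k + (k + d)) * (k + d).choose k * m.choose (k + d) =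
      m.choose k * ((-1) ^ d * (m - k).choose d) := by
    intro d
    have h := Nat.choose_mul (n := m) (Nat.le_add_right k d)
    rw [Nat.add_sub_cancel_left] at h
    have h' : (m.choose (k + d) : ℤ) * (k + d).choose k = m.choose k * (m - k).choose d := by
      exact_mod_cast h
    rw [show k + (k + d) = d + 2 * k by ring, pow_add, pow_mul, neg_one_sq, one_pow, mul_one]
    linear_combination (-1 : ℤ) ^ d * h'
  have htrunc : ∑ d ∈ range (M + 1 - k), (-1 : ℤ) ^ d * (m - k).choose d =
      ∑ d ∈ range (m - k + 1), (-1 : ℤ) ^ d * (m - k).choose d := by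
    refine (sum_subset (range_subset_range.2 (by omega)) fun d _ hd => ?_).symm
    rw [mem_range, not_lt] at hd
    rw [Nat.choose_eq_zero_of_lt (by omega), Nat.cast_zero, mul_zero]
  rw [← Ico_add_one_right_eq_Icc, sum_Ico_eq_sum_range, sum_congr rfl fun d _ => hterm d,
    ← mul_sum, htrunc, Int.alternating_sum_range_choose]
  obtain rfl | hne := eq_or_ne m k
  · simp
  · simp [hne, show m - k ≠ 0 by omega]

def adjStarts {n : ℕ} (q : ℕ) (π : Equiv.Perm (Fin n)) : Finset ℕ :=
  {i ∈ range n | IsAdjCycle q π i}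

section AdjStarts

variable {n q : ℕ} (hq : 0 < q)
include hq

lemma mem_adjStarts {π : Equiv.Perm (Fin n)} {i : ℕ} : i ∈ adjStarts q π ↔ IsAdjCycle q π i := by
  simp only [adjStarts, mem_filter, mem_range, and_iff_right_iff_imp]
  exact fun h => by have := h.1; omega

lemma natCard_isAdjCycle (π : Equiv.Perm (Fin n)) :
    Nat.card {i // IsAdjCycle q π i} = #(adjStarts q π) := by
  rw [← Nat.card_eq_finsetCard]
  exact Nat.card_congr (Equiv.subtypeEquivRight fun i => (mem_adjStarts hq).symm)

lemma isPacking_adjStarts (π : Equiv.Perm (Fin n)) : IsPacking q n (adjStarts q π) :=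
  isPacking_of_forall_isAdjCycle hq fun _ hi => (mem_adjStarts hq).1 hi

lemma card_adjStarts_le (π : Equiv.Perm (Fin n)) : #(adjStarts q π) ≤ n / q := by
  have hS := isPacking_adjStarts hq π
  rw [Nat.le_div_iff_mul_le hq, mul_comm, ← card_blocks hS]
  exact (card_le_card (blocks_subset_range hS)).trans_eq (card_range n)

theorem sum_choose_card_adjStarts (j : ℕ) :
    ∑ π : Equiv.Perm (Fin n), (#(adjStarts q π)).choose j =
      (n - (q - 1) * j).choose j * (n - q * j)! := by
  let r : Equiv.Perm (Fin n) → Finset ℕ → Prop := fun π S => S ⊆ adjStarts q π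
  calc ∑ π : Equiv.Perm (Fin n), (#(adjStarts q π)).choose j
      = ∑ π, #((packings q n j).bipartiteAbove r π) := by
        refine sum_congr rfl fun π _ => ?_
        rw [← card_powersetCard]
        congr 1
        ext S
        simp only [mem_powersetCard, bipartiteAbove, mem_filter, mem_packings hq, r]
        refine ⟨fun ⟨hSπ, hcard⟩ => ⟨⟨?_, hcard⟩, hSπ⟩, fun ⟨⟨_, hcard⟩, hSπ⟩ => ⟨hSπ, hcard⟩⟩
        exact isPacking_of_forall_isAdjCycle hq fun i hi => (mem_adjStarts hq).1 (hSπ hi)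
    _ = ∑ S ∈ packings q n j, #(univ.bipartiteBelow r S) :=
        sum_card_bipartiteAbove_eq_sum_card_bipartiteBelow r
    _ = ∑ S ∈ packings q n j, (n - q * j)! := by
        refine sum_congr rfl fun S hS => ?_
        obtain ⟨hSp, rfl⟩ := (mem_packings hq).1 hS
        rw [← card_filter_forall_isAdjCycle hq hSp]
        simp only [bipartiteBelow, r, subset_iff, mem_adjStarts hq]
    _ = (n - (q - 1) * j).choose j * (n - q * j)! := by
        rw [sum_const, card_packings hq, smul_eq_mul]

end AdjStarts

lemma cast_choose_mul_factorial {n q j : ℕ} (hq : 0 < q) (hjn : j * q ≤ n) :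
    (((n - (q - 1) * j).choose j * (n - q * j)! : ℕ) : ℚ) = (n - (q - 1) * j)! / j ! := by
  have hqj : (q - 1) * j + j = q * j := by
    rw [← Nat.succ_mul, Nat.succ_eq_add_one, Nat.sub_add_cancel hq]
  have h := Nat.choose_mul_factorial_mul_factorial (n := n - (q - 1) * j) (k := j)
    (by rw [mul_comm] at hjn; omega)
  rw [show n - (q - 1) * j - j = n - q * j by omega] at h
  rw [eq_div_iff (by positivity), ← h]
  push_cast
  ring

/-- The number of permutations of `{1,…,n}` whose disjoint cycle decomposition contains
exactly `k` adjacent `q`-cycles equals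
`∑_{j=k}^{⌊n/q⌋} (-1)^{k+j} (j choose k) (n-(q-1)j)!/j!`. -/
theorem card_perms_with_k_adjacent_q_cycles (n q k : ℕ) (hq : 1 ≤ q) :
    ((Nat.card {π : Equiv.Perm (Fin n) // Nat.card {i : ℕ // IsAdjCycle q π i} = k}) : ℚ) =
      ∑ j ∈ Finset.Icc k (n / q),
        (-1 : ℚ) ^ (k + j) * (j.choose k) *
          (Nat.factorial (n - (q - 1) * j)) / (Nat.factorial j) := by
  have hcard : Nat.card {π : Equiv.Perm (Fin n) // Nat.card {i : ℕ // IsAdjCycle q π i} = k} =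
      #{π : Equiv.Perm (Fin n) | #(adjStarts q π) = k} := by
    simp_rw [natCard_isAdjCycle hq, Nat.card_eq_fintype_card, Fintype.card_subtype]
  rw [hcard, natCast_card_filter]
  calc ∑ π : Equiv.Perm (Fin n), (if #(adjStarts q π) = k then 1 else 0 : ℚ)
      = ∑ π : Equiv.Perm (Fin n), ∑ j ∈ Icc k (n / q),
          (-1 : ℚ) ^ (k + j) * j.choose k * (#(adjStarts q π)).choose j := by
        refine sum_congr rfl fun π _ => ?_
        exact_mod_cast (sum_Icc_neg_one_pow_mul_choose_mul_choose (card_adjStarts_le hq π)).symm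
    _ = ∑ j ∈ Icc k (n / q), (-1 : ℚ) ^ (k + j) * j.choose k *
          ((n - (q - 1) * j).choose j * (n - q * j)! : ℕ) := by
        rw [sum_comm]
        refine sum_congr rfl fun j _ => ?_
        rw [← mul_sum, ← sum_choose_card_adjStarts hq, Nat.cast_sum]
    _ = _ := by
        refine sum_congr rfl fun j hj => ?_
        rw [mul_div_assoc,
          cast_choose_mul_factorial hq ((Nat.le_div_iff_mul_le hq).1 (mem_Icc.1 hj).2)]
end

section
/- Under Foata's fundamental transformation mapping π to σ, the number of cycles of π equals the number of left-to-right minima of σ. -/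
/-!
In Foata's word every cycle is written starting from its minimum, and these minima decrease from
left to right. A cycle minimum is therefore smaller than every earlier letter, since each of
those is at least the minimum of an earlier cycle, which is larger. Any other letter is at least
the minimum heading its own block, which stands before it. So the left-to-right minima of the
word are exactly the cycle minima, and `σ`, whose one-line notation is the word, carries its
left-to-right minimum positions bijectively onto them.
-/

open Classical in
/-- The one-line word of Foata's fundamental transformation: write each cycle of `π`
with its smallest element first, sort the cycles in descending order of their first
elements, and erase the parentheses. -/
noncomputable def foataWord {n : ℕ} (π : Equiv.Perm (Fin n)) : List (Fin n) :=
  (((List.finRange n).filter (fun m => decide (∀ k : ℕ, m ≤ (π ^ k) m))).reverse).flatMap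
    (fun m => (List.range (Function.minimalPeriod (⇑π) m)).map (fun k => (π ^ k) m))

/-- Foata's fundamental transformation as a map on permutations. -/
noncomputable def foataPerm {n : ℕ} (π : Equiv.Perm (Fin n)) : Equiv.Perm (Fin n) :=
  if h : ∃ σ : Equiv.Perm (Fin n), List.ofFn ⇑σ = foataWord π then h.choose else 1

namespace List

variable {α : Type*} [LinearOrder α] {l l₁ l₂ : List α} {a x : α}

def IsLeftToRightMin (l : List α) (x : α) : Prop := ∀ y, [y, x] <+ l → x < y

theorem isLeftToRightMin_iff_pairwise :
    l.IsLeftToRightMin x ↔ l.Pairwise (fun a b => b = x → x < a) := by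
  rw [pairwise_iff_forall_sublist]
  exact ⟨fun h a b hab hb => h a (hb ▸ hab), fun h y hy => h hy rfl⟩

theorem isLeftToRightMin_of_notMem (hx : x ∉ l) : l.IsLeftToRightMin x :=
  fun _ hy => absurd (hy.subset (mem_cons_of_mem _ (mem_singleton_self x))) hx

theorem isLeftToRightMin_append :
    (l₁ ++ l₂).IsLeftToRightMin x ↔
      l₁.IsLeftToRightMin x ∧ l₂.IsLeftToRightMin x ∧ (x ∈ l₂ → ∀ y ∈ l₁, x < y) := by
  simp only [isLeftToRightMin_iff_pairwise, pairwise_append]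
  exact and_congr_right' <| and_congr_right' ⟨fun h hx y hy => h y hy x hx rfl,
    fun h y hy _ hb hbx => h (hbx ▸ hb) y hy⟩

theorem isLeftToRightMin_cons :
    (a :: l).IsLeftToRightMin x ↔ (x ∈ l → x < a) ∧ l.IsLeftToRightMin x := by
  simp only [isLeftToRightMin_iff_pairwise, pairwise_cons]
  exact and_congr_left' ⟨fun h hx => h x hx rfl, fun h _ hb hbx => h (hbx ▸ hb)⟩

theorem isLeftToRightMin_ofFn_iff {n : ℕ} {f : Fin n → α} (hf : Function.Injective f)
    (i : Fin n) :
    (ofFn f).IsLeftToRightMin (f i) ↔ ∀ j < i, f i < f j := by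
  rw [isLeftToRightMin_iff_pairwise, pairwise_ofFn]
  exact ⟨fun h j hj => h hj rfl, fun h j k hjk hk => h j (hf hk ▸ hjk)⟩

theorem isLeftToRightMin_flatMap_iff {M : List α} {f : α → List α} (hM : M.Pairwise (· > ·))
    (hhead : ∀ m ∈ M, (f m).head? = some m) (hmin : ∀ m ∈ M, ∀ y ∈ f m, m ≤ y)
    (hnd : (M.flatMap f).Nodup) (hx : x ∈ M.flatMap f) :
    (M.flatMap f).IsLeftToRightMin x ↔ x ∈ M := by
  induction M with
  | nil => simp at hx
  | cons m M ih =>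
    obtain ⟨t, ht⟩ := head?_eq_some_iff.1 (hhead m mem_cons_self)
    obtain ⟨hmM, hM⟩ := pairwise_cons.1 hM
    have hM_sub : ∀ m' ∈ M, m' ∈ M.flatMap f := fun m' hm' =>
      mem_flatMap.2 ⟨m', hm', mem_of_mem_head? (hhead m' (mem_cons_of_mem _ hm'))⟩
    have hmin_m : ∀ y ∈ t, m ≤ y := fun y hy =>
      hmin m mem_cons_self y (ht ▸ mem_cons_of_mem _ hy)
    rw [flatMap_cons, ht] at hnd hx ⊢
    obtain ⟨hmt, hnd', hdisj⟩ := nodup_append.1 hnd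
    have hm_t : m ∉ t := (nodup_cons.1 hmt).1
    rw [isLeftToRightMin_append, isLeftToRightMin_cons, mem_cons]
    rcases mem_append.1 hx with hxmt | hxL
    · rcases mem_cons.1 hxmt with rfl | hxt
      · simp only [hm_t, false_imp_iff, isLeftToRightMin_of_notMem hm_t, true_and, true_or,
          iff_true]
        exact ⟨isLeftToRightMin_of_notMem fun h => hdisj x hxmt x h rfl,
          fun h => absurd rfl (hdisj x hxmt x h)⟩
      · refine iff_of_false (fun h => (h.1.1 hxt).not_ge (hmin_m x hxt)) ?_
        rintro (rfl | hxM)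
        · exact hm_t hxt
        · exact hdisj x hxmt x (hM_sub x hxM) rfl
    · have hx_mt : x ∉ m :: t := fun h => hdisj x h x hxL rfl
      rw [mem_cons, not_or] at hx_mt
      simp only [hx_mt.2, false_imp_iff, isLeftToRightMin_of_notMem hx_mt.2, hx_mt.1, true_and,
        false_or, hxL, true_imp_iff, ih hM (fun m' hm' => hhead m' (mem_cons_of_mem _ hm'))
          (fun m' hm' => hmin m' (mem_cons_of_mem _ hm')) hnd' hxL]
      refine ⟨And.left, fun hxM => ⟨hxM, fun y hy => (hmM x hxM).trans_le ?_⟩⟩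
      exact (mem_cons.1 hy).elim (fun h => h.ge) (hmin_m y)

theorem exists_perm_ofFn_eq {n : ℕ} {l : List (Fin n)} (hnd : l.Nodup) (hmem : ∀ x, x ∈ l) :
    ∃ σ : Equiv.Perm (Fin n), ofFn σ = l := by
  classical
  let e := hnd.getEquivOfForallMemList l hmem
  have hlen : l.length = n := by simpa using Fintype.card_congr e
  refine ⟨(finCongr hlen.symm).trans e, ext_getElem (by simp [hlen]) fun i _ _ => ?_⟩
  simp [e]

end List

namespace Equiv.Perm

open Function List

variable {α : Type*} (π : Perm α)

noncomputable def cycleWord (x : α) : List α := (range (minimalPeriod π x)).map fun k => (π ^ k) x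

theorem coe_cycleWord (x : α) : (π.cycleWord x : Cycle α) = periodicOrbit π x := by
  simp [cycleWord, periodicOrbit_def, coe_pow]

theorem nodup_cycleWord (x : α) : (π.cycleWord x).Nodup :=
  Cycle.nodup_coe_iff.1 (π.coe_cycleWord x ▸ nodup_periodicOrbit)

variable [Finite α]

theorem mem_cycleWord {x y : α} : y ∈ π.cycleWord x ↔ π.SameCycle x y := by
  rw [← Cycle.mem_coe_iff, coe_cycleWord, mem_periodicOrbit_iff (π.injective.mem_periodicPts x)]
  simp only [← coe_pow]
  exact ⟨fun ⟨k, hk⟩ => ⟨k, by simpa using hk⟩, SameCycle.exists_nat_pow_eq⟩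

theorem head?_cycleWord (x : α) : (π.cycleWord x).head? = some x := by
  simp [cycleWord, head?_range,
    (minimalPeriod_pos_of_mem_periodicPts (π.injective.mem_periodicPts x)).ne']

variable [LinearOrder α]

theorem forall_le_pow_apply_iff_forall_sameCycle {m : α} :
    (∀ k : ℕ, m ≤ (π ^ k) m) ↔ ∀ y, π.SameCycle m y → m ≤ y := by
  refine ⟨fun h y hy => ?_, fun h k => h _ ⟨k, by simp⟩⟩
  obtain ⟨k, rfl⟩ := hy.exists_nat_pow_eq
  exact h k

theorem exists_sameCycle_forall_le_pow_apply (x : α) :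
    ∃ m, π.SameCycle m x ∧ ∀ k : ℕ, m ≤ (π ^ k) m := by
  have := Fintype.ofFinite α
  classical
  obtain ⟨m, hm, hmin⟩ :=
    (Finset.univ.filter (π.SameCycle x)).exists_min_image id ⟨x, by simp [SameCycle.refl]⟩
  simp only [Finset.mem_filter, Finset.mem_univ, true_and, id] at hm hmin
  exact ⟨m, hm.symm,
    π.forall_le_pow_apply_iff_forall_sameCycle.2 fun y hy => hmin y (hm.trans hy)⟩

theorem eq_of_sameCycle_of_forall_le_pow_apply {m₁ m₂ : α} (h : π.SameCycle m₁ m₂)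
    (h₁ : ∀ k : ℕ, m₁ ≤ (π ^ k) m₁) (h₂ : ∀ k : ℕ, m₂ ≤ (π ^ k) m₂) : m₁ = m₂ :=
  (π.forall_le_pow_apply_iff_forall_sameCycle.1 h₁ m₂ h).antisymm
    (π.forall_le_pow_apply_iff_forall_sameCycle.1 h₂ m₁ h.symm)

end Equiv.Perm

open Function List

section Foata

variable {n : ℕ} (π : Equiv.Perm (Fin n))

open Classical in
noncomputable def cycleMinima : List (Fin n) :=
  ((finRange n).filter fun m => decide (∀ k : ℕ, m ≤ (π ^ k) m)).reverse

theorem foataWord_eq_flatMap : foataWord π = (cycleMinima π).flatMap π.cycleWord := rfl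

theorem mem_cycleMinima {m : Fin n} : m ∈ cycleMinima π ↔ ∀ k : ℕ, m ≤ (π ^ k) m := by
  simp [cycleMinima]

theorem pairwise_gt_cycleMinima : (cycleMinima π).Pairwise (· > ·) := by
  rw [cycleMinima, pairwise_reverse]
  exact (pairwise_lt_finRange n).filter _

theorem mem_foataWord (x : Fin n) : x ∈ foataWord π := by
  obtain ⟨m, hmx, hm⟩ := π.exists_sameCycle_forall_le_pow_apply x
  exact mem_flatMap.2 ⟨m, (mem_cycleMinima π).2 hm, π.mem_cycleWord.2 hmx⟩

theorem nodup_foataWord : (foataWord π).Nodup := by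
  refine nodup_flatMap.2 ⟨fun m _ => π.nodup_cycleWord m, ?_⟩
  refine (pairwise_gt_cycleMinima π).imp_of_mem fun hm₁ hm₂ hlt x hx₁ hx₂ => hlt.ne' ?_
  exact π.eq_of_sameCycle_of_forall_le_pow_apply
    ((π.mem_cycleWord.1 hx₁).trans (π.mem_cycleWord.1 hx₂).symm)
    ((mem_cycleMinima π).1 hm₁) ((mem_cycleMinima π).1 hm₂)

theorem ofFn_foataPerm : ofFn (foataPerm π) = foataWord π := by
  have h := exists_perm_ofFn_eq (nodup_foataWord π) (mem_foataWord π)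
  rw [foataPerm, dif_pos h]
  exact h.choose_spec

theorem isLeftToRightMin_foataWord_iff (x : Fin n) :
    (foataWord π).IsLeftToRightMin x ↔ ∀ k : ℕ, x ≤ (π ^ k) x := by
  rw [foataWord_eq_flatMap, isLeftToRightMin_flatMap_iff (pairwise_gt_cycleMinima π)
    (fun m _ => π.head?_cycleWord m) _ (nodup_foataWord π) (mem_foataWord π x), mem_cycleMinima]
  intro m hm y hy
  obtain ⟨k, -, rfl⟩ := mem_map.1 hy
  exact (mem_cycleMinima π).1 hm k

end Foata

/-- Under Foata's fundamental transformation `π ↦ σ`, the number of cycles of `π`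
(counted via their minimal elements) equals the number of left-to-right minima of `σ`. -/
theorem foata_cycles_eq_ltr_minima {n : ℕ} (π σ : Equiv.Perm (Fin n))
    (h : σ = foataPerm π) :
    Nat.card {m : Fin n // ∀ k : ℕ, m ≤ (π ^ k) m} =
      Nat.card {i : Fin n // ∀ j, j < i → σ i < σ j} := by
  have hσ (i : Fin n) : (∀ j, j < i → σ i < σ j) ↔ ∀ k : ℕ, σ i ≤ (π ^ k) (σ i) := by
    rw [← isLeftToRightMin_ofFn_iff σ.injective, h, ofFn_foataPerm, isLeftToRightMin_foataWord_iff]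
  exact Nat.card_congr (σ.subtypeEquiv hσ).symm
end

section
/- Under Foata's fundamental transformation mapping π to σ, the number of fixed points of π equals the number of occurrences in σ of the pattern r_1 plus the number of occurrences of the pattern s_1, where an occurrence of r_1 is a position i that is a left-to-right minimum, is the last position (i = n), and σ(i) = 1 (i.e., σ(n)=1 is the minimum value at the last position); and an occurrence of s_1 is a pair of adjacent positions i, i+1 that are both left-to-right minima of σ. -/
namespace Foata

open Equiv Function

section CycleMin

variable {α : Type*} [Fintype α] [LinearOrder α] (π : Perm α)

def IsCycleMin (m : α) : Prop := ∀ k : ℕ, m ≤ (π ^ k) m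

noncomputable def cycleMin (x : α) : α :=
  (Finset.univ.filter (π.SameCycle x)).min' ⟨x, Finset.mem_filter.2 ⟨Finset.mem_univ x, .rfl⟩⟩

variable {π}

theorem sameCycle_cycleMin (x : α) : π.SameCycle x (cycleMin π x) :=
  (Finset.mem_filter.1 (Finset.min'_mem _ _)).2

theorem cycleMin_le {x y : α} (h : π.SameCycle x y) : cycleMin π x ≤ y :=
  Finset.min'_le _ _ (Finset.mem_filter.2 ⟨Finset.mem_univ y, h⟩)

theorem cycleMin_le_self (x : α) : cycleMin π x ≤ x :=
  cycleMin_le .rfl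

theorem cycleMin_eq_of_sameCycle {x y : α} (h : π.SameCycle x y) :
    cycleMin π x = cycleMin π y :=
  le_antisymm (cycleMin_le (h.trans (sameCycle_cycleMin y)))
    (cycleMin_le (h.symm.trans (sameCycle_cycleMin x)))

@[simp]
theorem cycleMin_pow_apply (k : ℕ) (x : α) : cycleMin π ((π ^ k) x) = cycleMin π x :=
  (cycleMin_eq_of_sameCycle (Perm.sameCycle_pow_right.2 .rfl)).symm

@[simp]
theorem cycleMin_apply (x : α) : cycleMin π (π x) = cycleMin π x :=
  cycleMin_pow_apply 1 x

theorem isCycleMin_iff {x : α} : IsCycleMin π x ↔ cycleMin π x = x := by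
  refine ⟨fun h => le_antisymm (cycleMin_le_self x) ?_, fun h k => ?_⟩
  · obtain ⟨k, -, hk⟩ := (sameCycle_cycleMin (π := π) x).exists_pow_eq'
    exact hk ▸ h k
  · exact h.symm.le.trans (cycleMin_le (Perm.sameCycle_pow_right.2 .rfl))

theorem isCycleMin_cycleMin (x : α) : IsCycleMin π (cycleMin π x) :=
  isCycleMin_iff.2 (cycleMin_eq_of_sameCycle (sameCycle_cycleMin x).symm)

theorem apply_eq_self_iff {x : α} : π x = x ↔ IsCycleMin π x ∧ π x = cycleMin π x := by
  refine ⟨fun h => ?_, fun ⟨hx, h⟩ => h.trans (isCycleMin_iff.1 hx)⟩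
  have hx : IsCycleMin π x := fun k => (Perm.pow_apply_eq_self_of_apply_eq_self h k).ge
  exact ⟨hx, h.trans (isCycleMin_iff.1 hx).symm⟩

end CycleMin

section CycleWord

variable {α : Type*} (π : Perm α)

noncomputable def cycleWord (m : α) : List α :=
  (List.range (minimalPeriod π m)).map fun k => (π ^ k) m

variable {π}

theorem nodup_cycleWord (m : α) : (cycleWord π m).Nodup :=
  List.nodup_range.map_on fun _ hk _ hl h => by
    simpa [← Perm.iterate_eq_pow] using
      iterate_injOn_Iio_minimalPeriod (List.mem_range.1 hk) (List.mem_range.1 hl) h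

variable [Finite α]

theorem minimalPeriod_pos (x : α) : 0 < minimalPeriod π x :=
  minimalPeriod_pos_of_mem_periodicPts (π.injective.mem_periodicPts x)

theorem head?_cycleWord (m : α) : (cycleWord π m).head? = some m := by
  simp [cycleWord, List.head?_range, (minimalPeriod_pos m).ne']

theorem apply_of_mem_getLast?_cycleWord {m x : α} (hx : x ∈ (cycleWord π m).getLast?) :
    π x = m := by
  simp only [cycleWord, List.getLast?_map, List.getLast?_range, (minimalPeriod_pos m).ne',
    if_false, Option.map_some, Option.mem_def, Option.some.injEq] at hx
  rw [← hx, ← Perm.mul_apply, ← pow_succ', Nat.sub_add_cancel (minimalPeriod_pos m),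
    ← Perm.iterate_eq_pow, iterate_minimalPeriod]

theorem mem_cycleWord {m x : α} : x ∈ cycleWord π m ↔ π.SameCycle m x := by
  refine ⟨fun hx => ?_, fun h => ?_⟩
  · obtain ⟨k, -, rfl⟩ := List.mem_map.1 hx
    exact Perm.sameCycle_pow_right.2 .rfl
  · obtain ⟨k, -, rfl⟩ := h.exists_pow_eq'
    refine List.mem_map.2 ⟨k % minimalPeriod π m,
      List.mem_range.2 (Nat.mod_lt _ (minimalPeriod_pos m)), ?_⟩
    simp only [← Perm.iterate_eq_pow, iterate_mod_minimalPeriod_eq]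

theorem mem_of_mem_head?_flatMap_cycleWord {ms : List α} {x : α}
    (hx : x ∈ (ms.flatMap (cycleWord π)).head?) : x ∈ ms := by
  cases ms with
  | nil => simp at hx
  | cons m ms =>
    rw [List.flatMap_cons, List.head?_append, head?_cycleWord] at hx
    simp_all

end CycleWord

section FoataStep

variable {α : Type*} [Fintype α] [LinearOrder α] (π : Perm α)

/-- `y` can follow `x` in a Foata word. -/
def FoataStep (x y : α) : Prop :=
  (IsCycleMin π y ∧ π x = cycleMin π x) ∨ (¬IsCycleMin π y ∧ y = π x)

variable {π}

theorem FoataStep.isCycleMin_iff {x y : α} (h : FoataStep π x y) :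
    IsCycleMin π y ↔ π x = cycleMin π x := by
  rcases h with ⟨hy, hx⟩ | ⟨hy, rfl⟩
  · exact iff_of_true hy hx
  · refine iff_of_false hy fun hx => hy ?_
    rw [Foata.isCycleMin_iff, cycleMin_apply, hx]

theorem cycleMin_of_mem_cycleWord {m x : α} (hm : IsCycleMin π m) (hx : x ∈ cycleWord π m) :
    cycleMin π x = m :=
  (cycleMin_eq_of_sameCycle (mem_cycleWord.1 hx)).symm.trans (isCycleMin_iff.1 hm)

theorem isChain_cycleWord {m : α} (hm : IsCycleMin π m) :
    (cycleWord π m).IsChain (FoataStep π) := by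
  rw [cycleWord, List.isChain_map, List.isChain_range]
  intro k hk
  refine .inr ⟨fun h => ?_, by rw [pow_succ', Perm.mul_apply]⟩
  have hret : (π ^ (k + 1)) m = (π ^ 0) m := by
    rw [← Foata.isCycleMin_iff.1 h, cycleMin_pow_apply, Foata.isCycleMin_iff.1 hm, pow_zero,
      Perm.one_apply]
  simp only [← Perm.iterate_eq_pow] at hret
  exact k.succ_ne_zero ((iterate_eq_iterate_iff_of_lt_minimalPeriod (by omega)
    (minimalPeriod_pos m)).1 hret)

variable {ms : List α}

theorem isChain_flatMap_cycleWord (hms : ∀ m ∈ ms, IsCycleMin π m) :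
    (ms.flatMap (cycleWord π)).IsChain (FoataStep π) := by
  rw [List.flatMap_def, List.isChain_flatten (by simp [← List.head?_eq_none_iff, head?_cycleWord]),
    List.forall_mem_map, List.isChain_map, List.isChain_iff_getElem]
  refine ⟨fun m hm => isChain_cycleWord (hms m hm), fun i hi x hx y hy => .inl ⟨?_, ?_⟩⟩
  · rw [head?_cycleWord, Option.mem_some_iff] at hy
    exact hy ▸ hms _ (List.getElem_mem _)
  · rw [apply_of_mem_getLast?_cycleWord hx, cycleMin_of_mem_cycleWord (hms _ (List.getElem_mem _))
      (List.mem_of_getLast? hx)]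

theorem apply_eq_cycleMin_of_mem_getLast? (hms : ∀ m ∈ ms, IsCycleMin π m) {x : α}
    (hx : x ∈ (ms.flatMap (cycleWord π)).getLast?) : π x = cycleMin π x := by
  have hms' : ∀ m ∈ ms ++ [cycleMin π x], IsCycleMin π m :=
    List.forall_mem_append.2 ⟨hms, List.forall_mem_singleton.2 (isCycleMin_cycleMin x)⟩
  have h := isChain_flatMap_cycleWord hms'
  rw [List.flatMap_append, List.flatMap_singleton, List.isChain_append] at h
  exact (h.2.2 x hx _ (head?_cycleWord _)).isCycleMin_iff.1 (isCycleMin_cycleMin x)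

theorem pairwise_cycleMin_flatMap_cycleWord (hms : ∀ m ∈ ms, IsCycleMin π m)
    (hlt : ms.Pairwise (· > ·)) :
    (ms.flatMap (cycleWord π)).Pairwise (fun x y => cycleMin π y ≤ cycleMin π x) := by
  rw [List.pairwise_flatMap]
  refine ⟨fun m hm => List.pairwise_of_forall_mem_list fun x hx y hy => ?_,
    hlt.imp_of_mem fun ha hb hab x hx y hy => ?_⟩
  · rw [cycleMin_of_mem_cycleWord (hms m hm) hx, cycleMin_of_mem_cycleWord (hms m hm) hy]
  · rw [cycleMin_of_mem_cycleWord (hms _ ha) hx, cycleMin_of_mem_cycleWord (hms _ hb) hy]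
    exact hab.le

theorem nodup_flatMap_cycleWord (hms : ∀ m ∈ ms, IsCycleMin π m)
    (hlt : ms.Pairwise (· > ·)) : (ms.flatMap (cycleWord π)).Nodup := by
  rw [List.Nodup, List.pairwise_flatMap]
  refine ⟨fun m _ => nodup_cycleWord m, hlt.imp_of_mem fun ha hb hab x hx y hy hxy => hab.ne' ?_⟩
  rw [← cycleMin_of_mem_cycleWord (hms _ ha) hx, ← cycleMin_of_mem_cycleWord (hms _ hb) hy, hxy]

end FoataStep

section FoataWord

variable {n : ℕ} (π : Perm (Fin n))

open Classical in
noncomputable def cycleMins : List (Fin n) :=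
  ((List.finRange n).filter (fun m => decide (∀ k : ℕ, m ≤ (π ^ k) m))).reverse

theorem foataWord_eq_flatMap : foataWord π = (cycleMins π).flatMap (cycleWord π) := rfl

variable {π}

theorem mem_cycleMins {m : Fin n} : m ∈ cycleMins π ↔ IsCycleMin π m := by
  simp [cycleMins, IsCycleMin]

theorem pairwise_gt_cycleMins : (cycleMins π).Pairwise (· > ·) := by
  rw [cycleMins, List.pairwise_reverse]
  exact (List.pairwise_lt_finRange n).filter _

theorem nodup_foataWord : (foataWord π).Nodup :=
  nodup_flatMap_cycleWord (fun _ => mem_cycleMins.1) pairwise_gt_cycleMins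

theorem mem_foataWord (x : Fin n) : x ∈ foataWord π :=
  List.mem_flatMap.2 ⟨cycleMin π x, mem_cycleMins.2 (isCycleMin_cycleMin x),
    mem_cycleWord.2 (sameCycle_cycleMin x).symm⟩

theorem exists_ofFn_eq_foataWord : ∃ σ : Perm (Fin n), List.ofFn σ = foataWord π := by
  let e := nodup_foataWord.getEquivOfForallMemList _ (mem_foataWord (π := π))
  have hlen : (foataWord π).length = n := by simpa using Fintype.card_congr e
  refine ⟨(finCongr hlen).symm.trans e, List.ext_getElem (by simp [hlen]) fun i _ _ => ?_⟩
  simp [e, List.Nodup.getEquivOfForallMemList]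

theorem ofFn_foataPerm : List.ofFn (foataPerm π) = foataWord π := by
  rw [foataPerm, dif_pos exists_ofFn_eq_foataWord]
  exact exists_ofFn_eq_foataWord.choose_spec

theorem foataStep_foataPerm {i j : Fin n} (hij : (j : ℕ) = i + 1) :
    FoataStep π (foataPerm π i) (foataPerm π j) := by
  have hchain : (List.ofFn (foataPerm π)).IsChain (FoataStep π) := by
    rw [ofFn_foataPerm]
    exact isChain_flatMap_cycleWord fun _ => mem_cycleMins.1
  obtain ⟨j, hj⟩ := j
  subst hij
  exact List.isChain_ofFn.1 hchain i hj

theorem apply_foataPerm_of_val_add_one_eq {i : Fin n} (hi : (i : ℕ) + 1 = n) :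
    π (foataPerm π i) = cycleMin π (foataPerm π i) := by
  apply apply_eq_cycleMin_of_mem_getLast? fun _ => mem_cycleMins.1
  rw [← foataWord_eq_flatMap, ← ofFn_foataPerm, List.getLast?_eq_getElem?]
  simp [show n - 1 = i by omega]

theorem isCycleMin_foataPerm_of_val_eq_zero {i : Fin n} (hi : (i : ℕ) = 0) :
    IsCycleMin π (foataPerm π i) := by
  refine mem_cycleMins.1 (mem_of_mem_head?_flatMap_cycleWord (π := π) ?_)
  rw [← foataWord_eq_flatMap, ← ofFn_foataPerm, List.head?_eq_getElem?]
  simp [← hi]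

theorem antitone_cycleMin_foataPerm : Antitone (cycleMin π ∘ foataPerm π) := by
  have h := pairwise_cycleMin_flatMap_cycleWord (π := π) (fun _ => mem_cycleMins.1)
    pairwise_gt_cycleMins
  rw [← foataWord_eq_flatMap, ← ofFn_foataPerm, List.pairwise_ofFn] at h
  exact antitone_iff_forall_lt.2 h

theorem exists_le_foataPerm_eq_cycleMin (i : Fin n) :
    ∃ j ≤ i, foataPerm π j = cycleMin π (foataPerm π i) := by
  obtain ⟨k, hk⟩ := i
  induction k with
  | zero => exact ⟨_, le_rfl, (isCycleMin_iff.1 (isCycleMin_foataPerm_of_val_eq_zero rfl)).symm⟩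
  | succ k ih =>
    rcases foataStep_foataPerm (π := π) (i := ⟨k, by omega⟩) (j := ⟨k + 1, hk⟩) rfl with
      ⟨hstart, -⟩ | ⟨-, hnext⟩
    · exact ⟨_, le_rfl, (isCycleMin_iff.1 hstart).symm⟩
    · obtain ⟨j, hj, hmin⟩ := ih (by omega)
      exact ⟨j, hj.trans (Fin.mk_le_mk.2 k.le_succ), by rw [hmin, hnext, cycleMin_apply]⟩

theorem forall_lt_foataPerm_lt_iff (i : Fin n) :
    (∀ j, j < i → foataPerm π i < foataPerm π j) ↔ IsCycleMin π (foataPerm π i) := by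
  refine ⟨fun h => ?_, fun h j hj => ?_⟩
  · obtain ⟨j, hj, hmin⟩ := exists_le_foataPerm_eq_cycleMin (π := π) i
    rcases hj.lt_or_eq with hj | rfl
    · exact absurd (h j hj) (hmin ▸ (cycleMin_le_self _).not_gt)
    · exact isCycleMin_iff.2 hmin.symm
  · refine lt_of_le_of_ne ?_ ((foataPerm π).injective.ne hj.ne')
    calc foataPerm π i = cycleMin π (foataPerm π i) := (isCycleMin_iff.1 h).symm
      _ ≤ cycleMin π (foataPerm π j) := antitone_cycleMin_foataPerm hj.le
      _ ≤ foataPerm π j := cycleMin_le_self _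

theorem cycleMin_foataPerm_of_val_add_one_eq {i : Fin n} (hi : (i : ℕ) + 1 = n) :
    (cycleMin π (foataPerm π i)).val = 0 := by
  let z : Fin n := ⟨0, by omega⟩
  have h := antitone_cycleMin_foataPerm (π := π)
    (show (foataPerm π).symm z ≤ i from Fin.le_iff_val_le_val.2 (by omega))
  simp only [comp_apply, apply_symm_apply] at h
  exact Nat.eq_zero_of_le_zero (h.trans (cycleMin_le_self z))

theorem apply_foataPerm_eq_self_iff (i : Fin n) :
    π (foataPerm π i) = foataPerm π i ↔
      ((i : ℕ) = n - 1 ∧ (foataPerm π i : ℕ) = 0 ∧ IsCycleMin π (foataPerm π i)) ∨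
      ∃ i' : Fin n, (i' : ℕ) = i + 1 ∧
        IsCycleMin π (foataPerm π i) ∧ IsCycleMin π (foataPerm π i') := by
  rw [apply_eq_self_iff]
  by_cases hi : (i : ℕ) + 1 = n
  · rw [or_iff_left fun ⟨i', hi', _⟩ => by have := i'.isLt; omega]
    have hmin := cycleMin_foataPerm_of_val_add_one_eq (π := π) hi
    refine ⟨fun ⟨h, _⟩ => ⟨by omega, isCycleMin_iff.1 h ▸ hmin, h⟩,
      fun ⟨_, _, h⟩ => ⟨h, apply_foataPerm_of_val_add_one_eq hi⟩⟩
  · rw [or_iff_right fun ⟨_, _, _⟩ => by omega]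
    refine ⟨fun ⟨h, hclose⟩ => ⟨⟨i + 1, by omega⟩, rfl, h, ?_⟩,
      fun ⟨i', hi', h, h'⟩ => ⟨h, (foataStep_foataPerm hi').isCycleMin_iff.1 h'⟩⟩
    exact (foataStep_foataPerm rfl).isCycleMin_iff.2 hclose

end FoataWord

end Foata

open Foata in
/-- Under Foata's fundamental transformation `π ↦ σ`, the number of fixed points of `π`
equals the number of occurrences of `r₁` in `σ` (a left-to-right minimum at the last
position carrying the smallest value) plus the number of occurrences of `s₁` in `σ`
(two adjacent positions which are both left-to-right minima). -/
theorem foata_fixed_points_eq_r1_add_s1 {n : ℕ} (π σ : Equiv.Perm (Fin n))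
    (h : σ = foataPerm π) :
    Nat.card {i : Fin n // π i = i} =
      Nat.card {i : Fin n //
        (i : ℕ) = n - 1 ∧ (σ i : ℕ) = 0 ∧ ∀ j, j < i → σ i < σ j} +
      Nat.card {i : Fin n // ∃ i' : Fin n, (i' : ℕ) = (i : ℕ) + 1 ∧
        (∀ j, j < i → σ i < σ j) ∧ (∀ j, j < i' → σ i' < σ j)} := by
  subst h
  classical
  simp_rw [forall_lt_foataPerm_lt_iff]
  have hdisj : Disjoint
      (fun i : Fin n => (i : ℕ) = n - 1 ∧ (foataPerm π i : ℕ) = 0 ∧ IsCycleMin π (foataPerm π i))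
      (fun i => ∃ i' : Fin n, (i' : ℕ) = i + 1 ∧
        IsCycleMin π (foataPerm π i) ∧ IsCycleMin π (foataPerm π i')) :=
    fun r hlast hnext i hi => by
      obtain ⟨hlast, -⟩ := hlast i hi
      obtain ⟨i', hi', -⟩ := hnext i hi
      have := i'.isLt
      omega
  rw [← Nat.card_congr (Equiv.subtypeEquiv (foataPerm π) fun i =>
      (apply_foataPerm_eq_self_iff i).symm), Nat.card_eq_fintype_card,
    Fintype.card_subtype_or_disjoint _ _ hdisj, Nat.card_eq_fintype_card, Nat.card_eq_fintype_card]
end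

section
/- Foata's fundamental transformation restricts to a bijection between the set of permutations of {1,...,n} without fixed points (derangements) and the set of permutations σ of {1,...,n} such that no position i satisfies both that i and i+1 are left-to-right minima, and it is not the case that σ(n) = 1. -/
namespace FoataAux

open Classical

variable {n : ℕ}

/-- The cycle of `x` listed from `x`. -/
noncomputable def cyc (π : Equiv.Perm (Fin n)) (x : Fin n) : List (Fin n) :=
  (List.range (Function.minimalPeriod (⇑π) x)).map (fun k => (π ^ k) x)

def isMin (π : Equiv.Perm (Fin n)) (x : Fin n) : Prop := ∀ k : ℕ, x ≤ (π ^ k) x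

noncomputable def ms (π : Equiv.Perm (Fin n)) : List (Fin n) :=
  ((List.finRange n).filter (fun m => decide (∀ k : ℕ, m ≤ (π ^ k) m))).reverse

lemma foataWord_eq (π : Equiv.Perm (Fin n)) : foataWord π = (ms π).flatMap (cyc π) := rfl

variable {π : Equiv.Perm (Fin n)}

lemma pow_apply (k : ℕ) (x : Fin n) : (π ^ k) x = (⇑π)^[k] x := by
  rw [Equiv.Perm.iterate_eq_pow]

lemma mem_periodicPts (x : Fin n) : x ∈ Function.periodicPts ⇑π := by
  refine ⟨orderOf π, orderOf_pos π, ?_⟩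
  show (⇑π)^[orderOf π] x = x
  rw [Equiv.Perm.iterate_eq_pow, pow_orderOf_eq_one]; rfl

lemma per_pos (x : Fin n) : 0 < Function.minimalPeriod (⇑π) x :=
  Function.minimalPeriod_pos_of_mem_periodicPts (mem_periodicPts x)

lemma pow_per (x : Fin n) : (π ^ Function.minimalPeriod (⇑π) x) x = x := by
  rw [pow_apply]; exact Function.iterate_minimalPeriod

lemma pow_mod (k : ℕ) (x : Fin n) :
    (π ^ (k % Function.minimalPeriod (⇑π) x)) x = (π ^ k) x := by
  rw [pow_apply, pow_apply]; exact Function.iterate_mod_minimalPeriod_eq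

lemma cyc_length (x : Fin n) : (cyc π x).length = Function.minimalPeriod (⇑π) x := by
  simp [cyc]

lemma cyc_getElem (x : Fin n) (j : ℕ) (hj : j < (cyc π x).length) :
    (cyc π x)[j] = (π ^ j) x := by
  simp [cyc]

lemma cyc_nodup (x : Fin n) : (cyc π x).Nodup := by
  refine List.Nodup.map_on ?_ (List.nodup_range)
  intro a ha b hb hab
  rw [List.mem_range] at ha hb
  rw [pow_apply, pow_apply] at hab
  exact Function.iterate_injOn_Iio_minimalPeriod ha hb hab

lemma mem_cyc {x y : Fin n} : y ∈ cyc π x ↔ ∃ k : ℕ, (π ^ k) x = y := by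
  constructor
  · intro h
    simp only [cyc, List.mem_map, List.mem_range] at h
    obtain ⟨k, _, hk⟩ := h
    exact ⟨k, hk⟩
  · rintro ⟨k, rfl⟩
    simp only [cyc, List.mem_map, List.mem_range]
    exact ⟨k % _, Nat.mod_lt _ (per_pos x), pow_mod k x⟩

/-- "Same cycle" via natural powers. -/
def SC (π : Equiv.Perm (Fin n)) (x y : Fin n) : Prop := ∃ k : ℕ, (π ^ k) x = y

lemma SC.refl (x : Fin n) : SC π x x := ⟨0, rfl⟩

lemma SC.trans {x y z : Fin n} (h : SC π x y) (h' : SC π y z) : SC π x z := by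
  obtain ⟨k, rfl⟩ := h; obtain ⟨l, rfl⟩ := h'
  exact ⟨l + k, by rw [pow_add, Equiv.Perm.mul_apply]⟩

lemma SC.symm {x y : Fin n} (h : SC π x y) : SC π y x := by
  obtain ⟨k, rfl⟩ := h
  set r := Function.minimalPeriod (⇑π) x with hr
  have hrpos : 0 < r := per_pos x
  refine ⟨r - k % r, ?_⟩
  have h1 : (π ^ (r - k % r)) ((π ^ k) x) = (π ^ (r - k % r + k)) x := by
    rw [pow_add, Equiv.Perm.mul_apply]
  rw [h1, ← pow_mod (r - k % r + k) x]
  have hk : k % r < r := Nat.mod_lt _ hrpos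
  have h2 : (r - k % r + k) % r = 0 := by
    have h1' : r - k % r + k = r + r * (k / r) := by
      have h2' := Nat.mod_add_div k r
      omega
    rw [h1', Nat.add_mul_mod_self_left, Nat.mod_self]
  rw [h2]; rfl

lemma isMin_le_of_SC {m y : Fin n} (hm : isMin π m) (h : SC π m y) : m ≤ y := by
  obtain ⟨k, rfl⟩ := h; exact hm k

lemma isMin_eq_of_SC {m m' : Fin n} (hm : isMin π m) (hm' : isMin π m')
    (h : SC π m m') : m = m' :=
  le_antisymm (isMin_le_of_SC hm h) (isMin_le_of_SC hm' h.symm)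

lemma cyc_disjoint {m m' : Fin n} (hm : isMin π m) (hm' : isMin π m') (hne : m ≠ m') :
    List.Disjoint (cyc π m) (cyc π m') := by
  intro y hy hy'
  rw [mem_cyc] at hy hy'
  exact hne (isMin_eq_of_SC hm hm' (SC.trans hy (SC.symm hy')))

/-- The minimum of the orbit of `x`. -/
noncomputable def mu (π : Equiv.Perm (Fin n)) (x : Fin n) : Fin n :=
  ((cyc π x).toFinset).min' ⟨x, by rw [List.mem_toFinset, mem_cyc]; exact ⟨0, rfl⟩⟩

lemma mu_SC (x : Fin n) : SC π x (mu π x) := by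
  have := Finset.min'_mem ((cyc π x).toFinset)
    ⟨x, by rw [List.mem_toFinset, mem_cyc]; exact ⟨0, rfl⟩⟩
  rw [List.mem_toFinset, mem_cyc] at this
  exact this

lemma mu_le {x y : Fin n} (h : SC π x y) : mu π x ≤ y :=
  Finset.min'_le _ _ (by rw [List.mem_toFinset, mem_cyc]; exact h)

lemma isMin_mu (x : Fin n) : isMin π (mu π x) := by
  intro k
  exact mu_le (SC.trans (mu_SC x) ⟨k, rfl⟩)

lemma mem_cyc_mu (x : Fin n) : x ∈ cyc π (mu π x) := mem_cyc.2 (mu_SC x).symm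

lemma mem_ms {m : Fin n} : m ∈ ms π ↔ isMin π m := by
  simp only [ms, List.mem_reverse, List.mem_filter, List.mem_finRange, true_and,
    decide_eq_true_eq]
  rfl

lemma ms_sorted : (ms π).Pairwise (fun a b => b < a) := by
  rw [ms, List.pairwise_reverse]
  exact List.Pairwise.filter _ (List.pairwise_lt_finRange n)

lemma ms_mins : ∀ m ∈ ms π, isMin π m := fun m hm => mem_ms.1 hm

lemma word_nodup : (foataWord π).Nodup := by
  rw [foataWord_eq, List.nodup_flatMap]
  refine ⟨fun m _ => cyc_nodup m, ?_⟩
  refine List.Pairwise.imp_of_mem ?_ ms_sorted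
  intro a b ha hb hlt
  exact cyc_disjoint (ms_mins a ha) (ms_mins b hb) (ne_of_gt hlt)

lemma mem_word (x : Fin n) : x ∈ foataWord π := by
  rw [foataWord_eq, List.mem_flatMap]
  exact ⟨mu π x, mem_ms.2 (isMin_mu x), mem_cyc_mu x⟩

lemma word_length : (foataWord π).length = n := by
  have h1 : (foataWord π).toFinset = Finset.univ := by
    ext x; simp [mem_word x]
  have h2 := List.toFinset_card_of_nodup (word_nodup (π := π))
  rw [h1] at h2
  simpa using h2.symm

lemma exists_ofFn : ∃ σ : Equiv.Perm (Fin n), List.ofFn ⇑σ = foataWord π := by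
  have hlen : (foataWord π).length = n := word_length
  set f : Fin n → Fin n := fun i => (foataWord π).get (Fin.cast hlen.symm i) with hf
  have hinj : Function.Injective f := by
    intro a b hab
    have := List.nodup_iff_injective_get.mp (word_nodup (π := π)) hab
    have := congrArg Fin.val this
    simpa [Fin.val_eq_val] using this
  refine ⟨Equiv.ofBijective f (Finite.injective_iff_bijective.mp hinj), ?_⟩
  refine List.ext_getElem (by simpa using hlen.symm) ?_
  intro k h1 h2
  simp only [List.getElem_ofFn]
  rfl

lemma foataPerm_spec (π : Equiv.Perm (Fin n)) :
    List.ofFn ⇑(foataPerm π) = foataWord π := by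
  rw [foataPerm, dif_pos (exists_ofFn (π := π))]
  exact (exists_ofFn (π := π)).choose_spec

/-! ### Records -/

def RecAt (w : List (Fin n)) (i : ℕ) : Prop :=
  ∀ (j : ℕ) (hj : j < i) (hi : i < w.length), w[i]'hi < w[j]'(hj.trans hi)

lemma recAt_zero (w : List (Fin n)) : RecAt w 0 := by
  intro j hj _; omega

lemma getElem_idx_congr {w : List (Fin n)} {a b : ℕ} (h : a = b) (ha : a < w.length) :
    w[a]'ha = w[b]'(h ▸ ha) := by subst h; rfl

lemma cyc_head (m : Fin n) (h : 0 < (cyc π m).length) : (cyc π m)[0] = m := by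
  rw [cyc_getElem, pow_zero]; rfl

lemma le_of_mem_cyc {m y : Fin n} (hm : isMin π m) (hy : y ∈ cyc π m) : m ≤ y :=
  isMin_le_of_SC hm (mem_cyc.1 hy)

lemma lt_of_getElem_cyc {m : Fin n} (hm : isMin π m) {j : ℕ} (h0 : 0 < j)
    (hj : j < (cyc π m).length) : m < (cyc π m)[j] := by
  refine lt_of_le_of_ne (le_of_mem_cyc hm (List.getElem_mem hj)) ?_
  intro h
  have h0' : (0 : ℕ) < (cyc π m).length := h0.trans hj
  have h2 : (cyc π m)[0]'h0' = (cyc π m)[j] := (cyc_head m h0').trans h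
  have := ((cyc_nodup m).getElem_inj_iff).1 h2
  omega

lemma getElem_append_shift {u v : List (Fin n)} {i : ℕ} (hi : i < v.length)
    (h2 : u.length + i < (u ++ v).length) : (u ++ v)[u.length + i] = v[i] :=
  (List.getElem_append_right (by omega)).trans (getElem_idx_congr (by omega) _)

lemma recAt_append_right {u v : List (Fin n)} {i : ℕ}
    (h : RecAt (u ++ v) (u.length + i)) : RecAt v i := by
  intro j hj hi
  have hlen : u.length + i < (u ++ v).length := by rw [List.length_append]; omega
  have h2 := h (u.length + j) (by omega) hlen
  rwa [getElem_append_shift hi, getElem_append_shift (hj.trans hi)] at h2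

lemma recAt_append {u v : List (Fin n)} {i : ℕ} (h : RecAt v i)
    (hlt : ∀ (hi : i < v.length), ∀ y ∈ u, v[i] < y) :
    RecAt (u ++ v) (u.length + i) := by
  intro j hj hlen
  have hi : i < v.length := by
    have := hlen; rw [List.length_append] at this; omega
  rw [getElem_append_shift hi]
  by_cases hju : j < u.length
  · rw [List.getElem_append_left hju]
    exact hlt hi _ (List.getElem_mem hju)
  · have hj2 : j - u.length < i := by omega
    have e : (u ++ v)[j]'(hj.trans hlen) = v[j - u.length]'(hj2.trans hi) := by
      refine (List.getElem_append_right (by omega)).trans rfl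
    rw [e]
    exact h (j - u.length) hj2 hi

lemma flatMap_head_mem {t : List (Fin n)} (h : 0 < (t.flatMap (cyc π)).length) :
    (t.flatMap (cyc π))[0] ∈ t := by
  cases t with
  | nil => simp at h
  | cons m₂ t₂ =>
    have hP : 0 < (cyc π m₂).length := by rw [cyc_length]; exact per_pos m₂
    have e : ((m₂ :: t₂).flatMap (cyc π))[0]'h = m₂ := by
      have e1 : (m₂ :: t₂).flatMap (cyc π) = cyc π m₂ ++ t₂.flatMap (cyc π) :=
        List.flatMap_cons
      calc ((m₂ :: t₂).flatMap (cyc π))[0]'h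
          = (cyc π m₂ ++ t₂.flatMap (cyc π))[0]'(e1 ▸ h) := by
            exact List.getElem_of_eq e1 h
        _ = (cyc π m₂)[0]'hP := List.getElem_append_left hP
        _ = m₂ := cyc_head m₂ hP
    rw [e]
    exact List.mem_cons_self

lemma recAt_congr {w w' : List (Fin n)} (h : w = w') {i : ℕ} :
    RecAt w i ↔ RecAt w' i := by subst h; rfl

/-- Records of the word are exactly positions holding a cycle minimum of the list. -/
lemma recAt_iff (L : List (Fin n)) (hpair : L.Pairwise (fun a b => b < a))
    (hmin : ∀ m ∈ L, isMin π m) :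
    ∀ (i : ℕ) (hi : i < (L.flatMap (cyc π)).length),
      (RecAt (L.flatMap (cyc π)) i ↔ (L.flatMap (cyc π))[i] ∈ L) := by
  induction L with
  | nil => intro i hi; simp at hi
  | cons m t IH =>
    intro i hi0
    obtain ⟨hltm, htpair⟩ := List.pairwise_cons.1 hpair
    have hm : isMin π m := hmin m (List.mem_cons_self)
    have ht : ∀ m' ∈ t, isMin π m' := fun m' h => hmin m' (List.mem_cons_of_mem _ h)
    have hw : (m :: t).flatMap (cyc π) = cyc π m ++ t.flatMap (cyc π) :=
      List.flatMap_cons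
    set wt := t.flatMap (cyc π) with hwt
    set P := (cyc π m).length with hPdef
    have hP : 0 < P := by rw [hPdef, cyc_length]; exact per_pos m
    have hi : i < (cyc π m ++ wt).length := hw ▸ hi0
    have hvv : ((m :: t).flatMap (cyc π))[i]'hi0 = (cyc π m ++ wt)[i]'hi :=
      List.getElem_of_eq hw hi0
    rw [recAt_congr hw, hvv]
    have hlen : (cyc π m ++ wt).length = P + wt.length := by
      rw [List.length_append]
    by_cases hiP : i < P
    · have hvc : (cyc π m ++ wt)[i]'hi = (cyc π m)[i]'hiP := List.getElem_append_left hiP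
      rcases Nat.eq_zero_or_pos i with hi0' | hi0'
      · subst hi0'
        rw [hvc, cyc_head m hP]
        simp [recAt_zero]
      · rw [hvc]
        have hmlt : m < (cyc π m)[i] := lt_of_getElem_cyc hm hi0' hiP
        constructor
        · intro hrec
          exfalso
          have h2 := hrec 0 hi0' hi
          have e0 : (cyc π m ++ wt)[0]'(hi0'.trans hi) = m := by
            rw [List.getElem_append_left hP]; exact cyc_head m hP
          rw [e0, hvc] at h2
          exact absurd h2 (not_lt.2 hmlt.le)
        · intro hmem
          exfalso
          rcases List.mem_cons.1 hmem with h | h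
          · exact absurd h.symm (ne_of_lt hmlt)
          · exact absurd (hltm _ h) (not_lt.2 hmlt.le)
    · have hPle : P ≤ i := not_lt.1 hiP
      have hi' : i - P < wt.length := by
        have := hi; rw [hlen] at this; omega
      have hval : (cyc π m ++ wt)[i]'hi = wt[i - P]'hi' :=
        (List.getElem_append_right hPle).trans rfl
      have htail_iff := IH htpair ht (i - P) hi'
      constructor
      · intro hrec
        rw [hval]
        refine List.mem_cons_of_mem _ (htail_iff.1 ?_)
        refine recAt_append_right (u := cyc π m) (v := wt) ?_
        have e : P + (i - P) = i := by omega
        intro j hj hlen2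
        have hj2 : j < i := by
          have : (cyc π m).length + (i - P) = i := by omega
          omega
        have h2 := hrec j hj2 hi
        rw [getElem_idx_congr (show (cyc π m).length + (i - P) = i by omega)]
        exact h2
      · intro hmem
        have hmm : (cyc π m ++ wt)[i]'hi ∈ t := by
          rcases List.mem_cons.1 hmem with h | h
          · exfalso
            have h1 : (cyc π m ++ wt)[i]'hi ∈ wt := hval ▸ List.getElem_mem hi'
            obtain ⟨m'', hm'', hy⟩ := List.mem_flatMap.1 h1
            rw [h] at hy
            exact cyc_disjoint (ht m'' hm'') hm (ne_of_lt (hltm m'' hm'')) hy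
              (mem_cyc.2 ⟨0, rfl⟩)
          · exact h
        have hrt : RecAt wt (i - P) := htail_iff.2 (by rwa [hval] at hmm)
        have hres : RecAt (cyc π m ++ wt) (P + (i - P)) := by
          refine recAt_append hrt ?_
          intro hi2 y hy
          calc wt[i - P] = (cyc π m ++ wt)[i]'hi := hval.symm
            _ < m := hmm |> hltm _
            _ ≤ y := le_of_mem_cyc hm hy
        intro j hj hi2
        have h2 := hres j (by omega) (by rw [hlen]; omega)
        rw [getElem_idx_congr (show P + (i - P) = i by omega)] at h2
        exact h2

/-! ### Block heads -/

def HeadAt (w : List (Fin n)) (j i : ℕ) : Prop :=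
  j ≤ i ∧ RecAt w j ∧ ∀ l, j < l → l ≤ i → ¬ RecAt w l

lemma headAt_exists (w : List (Fin n)) : ∀ i, ∃ j, HeadAt w j i := by
  intro i
  induction i with
  | zero => exact ⟨0, le_refl 0, recAt_zero w, fun l h1 h2 => by omega⟩
  | succ i IH =>
    by_cases h : RecAt w (i+1)
    · exact ⟨i+1, le_refl _, h, fun l h1 h2 => by omega⟩
    · obtain ⟨j, hj1, hj2, hj3⟩ := IH
      refine ⟨j, by omega, hj2, fun l h1 h2 => ?_⟩
      rcases Nat.lt_or_ge l (i+1) with h3 | h3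
      · exact hj3 l h1 (by omega)
      · have he : l = i + 1 := by omega
        subst he; exact h

lemma headAt_unique {w : List (Fin n)} {j j' i : ℕ} (h : HeadAt w j i)
    (h' : HeadAt w j' i) : j = j' := by
  rcases lt_trichotomy j j' with hlt | he | hlt
  · exact absurd h'.2.1 (h.2.2 j' hlt h'.1)
  · exact he
  · exact absurd h.2.1 (h'.2.2 j hlt h.1)

lemma recAt_extend {m : Fin n} {t : List (Fin n)} (hm : isMin π m)
    (hltm : ∀ m' ∈ t, m' < m) (htpair : t.Pairwise (fun a b => b < a))
    (ht : ∀ m' ∈ t, isMin π m') {i' : ℕ}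
    (h : RecAt (t.flatMap (cyc π)) i') :
    RecAt (cyc π m ++ t.flatMap (cyc π)) ((cyc π m).length + i') := by
  refine recAt_append h ?_
  intro hi' y hy
  have hmem := (recAt_iff t htpair ht i' hi').1 h
  exact lt_of_lt_of_le (hltm _ hmem) (le_of_mem_cyc hm hy)

lemma recAt_boundary {m : Fin n} {t : List (Fin n)} (hm : isMin π m)
    (hltm : ∀ m' ∈ t, m' < m) (htpair : t.Pairwise (fun a b => b < a))
    (ht : ∀ m' ∈ t, isMin π m') :
    RecAt (cyc π m ++ t.flatMap (cyc π)) ((cyc π m).length) := by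
  have := recAt_extend hm hltm htpair ht (recAt_zero (t.flatMap (cyc π)))
  rwa [Nat.add_zero] at this

lemma pow_succ_apply (k : ℕ) (x : Fin n) : π ((π ^ k) x) = (π ^ (k+1)) x := by
  rw [pow_succ', Equiv.Perm.mul_apply]

/-- Successor formula: if position `i+1` is not a record, the word's entry there is
the image under `π` of the entry at `i`. -/
lemma succ_step (L : List (Fin n)) (hpair : L.Pairwise (fun a b => b < a))
    (hmin : ∀ m ∈ L, isMin π m) :
    ∀ (i : ℕ) (h1 : i + 1 < (L.flatMap (cyc π)).length),
      ¬ RecAt (L.flatMap (cyc π)) (i+1) →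
      π ((L.flatMap (cyc π))[i]'(by omega)) = (L.flatMap (cyc π))[i+1]'h1 := by
  induction L with
  | nil => intro i h1; simp at h1
  | cons m t IH =>
    intro i h1 hnr
    obtain ⟨hltm, htpair⟩ := List.pairwise_cons.1 hpair
    have hm : isMin π m := hmin m (List.mem_cons_self)
    have ht : ∀ m' ∈ t, isMin π m' := fun m' h => hmin m' (List.mem_cons_of_mem _ h)
    have hw : (m :: t).flatMap (cyc π) = cyc π m ++ t.flatMap (cyc π) :=
      List.flatMap_cons
    set wt := t.flatMap (cyc π) with hwt
    have hP : 0 < (cyc π m).length := by rw [cyc_length]; exact per_pos m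
    set P := (cyc π m).length with hPdef
    have h1' : i + 1 < (cyc π m ++ wt).length := hw ▸ h1
    have hnr' : ¬ RecAt (cyc π m ++ wt) (i+1) := by rwa [recAt_congr hw] at hnr
    have hei : ((m :: t).flatMap (cyc π))[i]'(by omega) = (cyc π m ++ wt)[i]'(by omega) :=
      List.getElem_of_eq hw _
    have hei1 : ((m :: t).flatMap (cyc π))[i+1]'h1 = (cyc π m ++ wt)[i+1]'h1' :=
      List.getElem_of_eq hw _
    rw [hei, hei1]
    have hlen : (cyc π m ++ wt).length = P + wt.length := List.length_append
    by_cases hiP : i + 1 < P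
    · have e1 : (cyc π m ++ wt)[i]'(by omega) = (π ^ i) m := by
        rw [List.getElem_append_left (by omega : i < P)]
        exact cyc_getElem m i (by omega)
      have e2 : (cyc π m ++ wt)[i+1]'h1' = (π ^ (i+1)) m := by
        rw [List.getElem_append_left hiP]
        exact cyc_getElem m (i+1) hiP
      rw [e1, e2, pow_succ_apply]
    · by_cases hiP2 : i + 1 = P
      · exfalso
        have hb := recAt_boundary hm hltm htpair ht
        rw [← hPdef, ← hiP2] at hb
        exact hnr' hb
      · have hPle : P ≤ i := by omega
        have hi'1 : (i - P) + 1 < wt.length := by omega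
        have hnr'' : ¬ RecAt wt ((i - P) + 1) := by
          intro hr
          have := recAt_extend hm hltm htpair ht hr
          rw [← hPdef, show P + (i - P + 1) = i + 1 by omega] at this
          exact hnr' this
        have hIH := IH htpair ht (i - P) hi'1 hnr''
        have e1 : (cyc π m ++ wt)[i]'(by omega) = wt[i - P]'(by omega) :=
          (List.getElem_append_right (by omega)).trans (getElem_idx_congr (by omega) _)
        have e2 : (cyc π m ++ wt)[i+1]'h1' = wt[i - P + 1]'hi'1 :=
          (List.getElem_append_right (by omega)).trans (getElem_idx_congr (by omega) _)
        rw [e1, e2]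
        exact hIH

/-- Wrap-around formula: if position `i` ends a block (the next position is a record
or the word ends), then `π` sends the entry at `i` to the entry at the block head. -/
lemma wrap_step (L : List (Fin n)) (hpair : L.Pairwise (fun a b => b < a))
    (hmin : ∀ m ∈ L, isMin π m) :
    ∀ (i : ℕ) (hi : i < (L.flatMap (cyc π)).length)
      (hor : i + 1 = (L.flatMap (cyc π)).length ∨ RecAt (L.flatMap (cyc π)) (i+1))
      (j : ℕ) (hj : HeadAt (L.flatMap (cyc π)) j i),
      π ((L.flatMap (cyc π))[i]'hi) = (L.flatMap (cyc π))[j]'(lt_of_le_of_lt hj.1 hi) := by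
  induction L with
  | nil => intro i hi; simp at hi
  | cons m t IH =>
    intro i hi hor j hj
    obtain ⟨hltm, htpair⟩ := List.pairwise_cons.1 hpair
    have hm : isMin π m := hmin m (List.mem_cons_self)
    have ht : ∀ m' ∈ t, isMin π m' := fun m' h => hmin m' (List.mem_cons_of_mem _ h)
    have hw : (m :: t).flatMap (cyc π) = cyc π m ++ t.flatMap (cyc π) :=
      List.flatMap_cons
    set wt := t.flatMap (cyc π) with hwt
    have hP : 0 < (cyc π m).length := by rw [cyc_length]; exact per_pos m
    set P := (cyc π m).length with hPdef
    have hi' : i < (cyc π m ++ wt).length := hw ▸ hi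
    have hj' : HeadAt (cyc π m ++ wt) j i := by
      obtain ⟨a, b, c⟩ := hj
      exact ⟨a, (recAt_congr hw).1 b, fun l h1 h2 => fun hr => c l h1 h2 ((recAt_congr hw).2 hr)⟩
    have hor' : i + 1 = (cyc π m ++ wt).length ∨ RecAt (cyc π m ++ wt) (i+1) := by
      rcases hor with h | h
      · exact Or.inl (hw ▸ h)
      · exact Or.inr ((recAt_congr hw).1 h)
    have hei : ((m :: t).flatMap (cyc π))[i]'hi = (cyc π m ++ wt)[i]'hi' :=
      List.getElem_of_eq hw _
    have hej : ((m :: t).flatMap (cyc π))[j]'(lt_of_le_of_lt hj.1 hi)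
        = (cyc π m ++ wt)[j]'(lt_of_le_of_lt hj'.1 hi') :=
      List.getElem_of_eq hw _
    rw [hei, hej]
    have hlen : (cyc π m ++ wt).length = P + wt.length := List.length_append
    by_cases hiP : i < P
    · have hiP2 : i + 1 = P := by
        by_contra hne
        have hiP1 : i + 1 < P := by omega
        have hnr : ¬ RecAt (cyc π m ++ wt) (i+1) := by
          intro hr
          have h2 := hr 0 (by omega) (by omega)
          have e0 : (cyc π m ++ wt)[0]'(by omega) = m := by
            rw [List.getElem_append_left hP]; exact cyc_head m hP
          have e1 : (cyc π m ++ wt)[i+1]'(by omega) = (cyc π m)[i+1]'hiP1 :=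
            List.getElem_append_left hiP1
          rw [e0, e1] at h2
          exact absurd h2 (not_lt.2 (lt_of_getElem_cyc hm (by omega) hiP1).le)
        rcases hor' with h | h
        · omega
        · exact hnr h
      -- i + 1 = P : wrap inside the first cycle
      have hj0 : HeadAt (cyc π m ++ wt) 0 i := by
        refine ⟨Nat.zero_le _, recAt_zero _, fun l h1 h2 hr => ?_⟩
        have h2' := hr 0 h1 (by omega)
        have e0 : (cyc π m ++ wt)[0]'(by omega) = m := by
          rw [List.getElem_append_left hP]; exact cyc_head m hP
        have e1 : (cyc π m ++ wt)[l]'(by omega) = (cyc π m)[l]'(by omega) :=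
          List.getElem_append_left (by omega)
        rw [e0, e1] at h2'
        exact absurd h2' (not_lt.2 (lt_of_getElem_cyc hm (by omega) (by omega)).le)
      have hj0' : j = 0 := headAt_unique hj' hj0
      have e1 : (cyc π m ++ wt)[i]'hi' = (π ^ i) m := by
        rw [List.getElem_append_left hiP]
        exact cyc_getElem m i hiP
      have e0 : (cyc π m ++ wt)[j]'(lt_of_le_of_lt hj'.1 hi') = m := by
        rw [getElem_idx_congr hj0', List.getElem_append_left hP]
        exact cyc_head m hP
      rw [e1, e0, pow_succ_apply, hiP2, hPdef, cyc_length]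
      exact pow_per m
    · have hPle : P ≤ i := by omega
      have hiw : i - P < wt.length := by omega
      have hbd : RecAt (cyc π m ++ wt) P := by
        have := recAt_boundary hm hltm htpair ht
        rwa [← hPdef] at this
      have hjP : P ≤ j := by
        by_contra hlt
        exact hj'.2.2 P (by omega) hPle hbd
      have hj1 : j ≤ i := hj'.1
      have hjw : HeadAt wt (j - P) (i - P) := by
        refine ⟨by omega, ?_, ?_⟩
        · have := hj'.2.1
          rw [show j = P + (j - P) by omega] at this
          exact recAt_append_right this
        · intro l h1 h2 hr
          have := recAt_extend hm hltm htpair ht hr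
          rw [← hPdef] at this
          exact hj'.2.2 (P + l) (by omega) (by omega) this
      have hor'' : (i - P) + 1 = wt.length ∨ RecAt wt ((i - P) + 1) := by
        rcases hor' with h | h
        · left; omega
        · right
          rw [show i + 1 = P + (i - P + 1) by omega] at h
          exact recAt_append_right h
      have hIH := IH htpair ht (i - P) hiw hor'' (j - P) hjw
      have e1 : (cyc π m ++ wt)[i]'hi' = wt[i - P]'hiw :=
        (List.getElem_append_right (by omega)).trans (getElem_idx_congr (by omega) _)
      have e2 : (cyc π m ++ wt)[j]'(lt_of_le_of_lt hj'.1 hi')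
          = wt[j - P]'(lt_of_le_of_lt hjw.1 hiw) :=
        (List.getElem_append_right (by omega)).trans (getElem_idx_congr (by omega) _)
      rw [e1, e2]
      exact hIH

/-! ### Assembly -/

lemma word_succ (π : Equiv.Perm (Fin n)) {w : List (Fin n)} (hw : w = foataWord π)
    (i : ℕ) (h1 : i + 1 < w.length) (hnr : ¬ RecAt w (i+1)) :
    π (w[i]'(by omega)) = w[i+1]'h1 := by
  subst hw
  exact succ_step (ms π) ms_sorted ms_mins i h1 hnr

lemma word_wrap (π : Equiv.Perm (Fin n)) {w : List (Fin n)} (hw : w = foataWord π)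
    (i : ℕ) (hi : i < w.length) (hor : i + 1 = w.length ∨ RecAt w (i+1))
    (j : ℕ) (hj : HeadAt w j i) :
    π (w[i]'hi) = w[j]'(lt_of_le_of_lt hj.1 hi) := by
  subst hw
  exact wrap_step (ms π) ms_sorted ms_mins i hi hor j hj

lemma word_getElem (π : Equiv.Perm (Fin n)) (i : ℕ) (hi : i < (foataWord π).length) :
    (foataWord π)[i] = foataPerm π ⟨i, by rw [← word_length (π := π)]; exact hi⟩ := by
  have h1 := List.getElem_of_eq (foataPerm_spec π).symm hi
  rw [h1, List.getElem_ofFn]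

lemma rec_translate (π : Equiv.Perm (Fin n)) (i : Fin n) :
    RecAt (foataWord π) i.val ↔ (∀ j : Fin n, j < i → foataPerm π i < foataPerm π j) := by
  have hlen : (foataWord π).length = n := word_length
  have hi : (i : ℕ) < (foataWord π).length := by rw [hlen]; exact i.isLt
  constructor
  · intro h j hj
    have hj' : (j : ℕ) < (i : ℕ) := hj
    have h2 := h j.val hj' hi
    rw [word_getElem π i.val hi, word_getElem π j.val (hj'.trans hi)] at h2
    exact h2
  · intro h j hj hi2
    have h2 := h ⟨j, by omega⟩ (by rw [Fin.lt_def]; exact hj)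
    rw [word_getElem π i.val hi2, word_getElem π j (hj.trans hi2)]
    exact h2

/-- A derangement maps into the target set. -/
lemma mapsTo_aux (π : Equiv.Perm (Fin n)) (hd : ∀ x, π x ≠ x) :
    (¬ ∃ i i' : Fin n, (i' : ℕ) = (i : ℕ) + 1 ∧
        (∀ j, j < i → foataPerm π i < foataPerm π j) ∧
        (∀ j, j < i' → foataPerm π i' < foataPerm π j)) ∧
      ¬ ∃ i : Fin n, (i : ℕ) = n - 1 ∧ (foataPerm π i : ℕ) = 0 := by
  have hlen : (foataWord π).length = n := word_length
  constructor
  · rintro ⟨i, i', hii, hri, hri'⟩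
    have hrw : RecAt (foataWord π) i.val := (rec_translate π i).2 hri
    have hrw' : RecAt (foataWord π) (i.val + 1) := by
      have := (rec_translate π i').2 hri'
      rwa [hii] at this
    have hiw : (i : ℕ) < (foataWord π).length := by rw [hlen]; exact i.isLt
    have hhead : HeadAt (foataWord π) i.val i.val :=
      ⟨le_refl _, hrw, fun l h1 h2 => by omega⟩
    have h2 := word_wrap π rfl i.val hiw (Or.inr hrw') i.val hhead
    rw [word_getElem π i.val hiw] at h2
    exact hd _ h2
  · rintro ⟨i, hin, hσ0⟩
    have hn : 0 < n := i.pos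
    have hiw : (i : ℕ) < (foataWord π).length := by rw [hlen]; exact i.isLt
    have hrec : ∀ j : Fin n, j < i → foataPerm π i < foataPerm π j := by
      intro j hj
      rw [Fin.lt_def, hσ0]
      rcases Nat.eq_zero_or_pos (foataPerm π j : ℕ) with h0 | h0
      · exfalso
        have : foataPerm π j = foataPerm π i := by
          apply Fin.val_injective; rw [h0, hσ0]
        have := (foataPerm π).injective this
        subst this
        exact lt_irrefl _ hj
      · exact h0
    have hrw : RecAt (foataWord π) i.val := (rec_translate π i).2 hrec
    have hhead : HeadAt (foataWord π) i.val i.val :=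
      ⟨le_refl _, hrw, fun l h1 h2 => by omega⟩
    have hor : i.val + 1 = (foataWord π).length ∨ RecAt (foataWord π) (i.val + 1) := by
      left; rw [hlen]; omega
    have h2 := word_wrap π rfl i.val hiw hor i.val hhead
    rw [word_getElem π i.val hiw] at h2
    exact hd _ h2

/-- If the image lies in the target set, the source is a derangement. -/
lemma rev_aux (π : Equiv.Perm (Fin n))
    (hT : (¬ ∃ i i' : Fin n, (i' : ℕ) = (i : ℕ) + 1 ∧
        (∀ j, j < i → foataPerm π i < foataPerm π j) ∧
        (∀ j, j < i' → foataPerm π i' < foataPerm π j)) ∧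
      ¬ ∃ i : Fin n, (i : ℕ) = n - 1 ∧ (foataPerm π i : ℕ) = 0) :
    ∀ x, π x ≠ x := by
  intro x hx
  have hlen : (foataWord π).length = n := word_length
  obtain ⟨i, hi, hxi⟩ := List.mem_iff_getElem.1 (mem_word (π := π) x)
  have hn : 0 < n := by omega
  by_cases hc : i + 1 < (foataWord π).length ∧ ¬ RecAt (foataWord π) (i+1)
  · have h2 := word_succ π rfl i hc.1 hc.2
    rw [hxi, hx, ← hxi] at h2
    have := (word_nodup (π := π)).getElem_inj_iff.1 h2
    omega
  · have hor : i + 1 = (foataWord π).length ∨ RecAt (foataWord π) (i+1) := by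
      rcases Nat.lt_or_ge (i+1) (foataWord π).length with h | h
      · right; by_contra h2; exact hc ⟨h, h2⟩
      · left; omega
    obtain ⟨j, hj⟩ := headAt_exists (foataWord π) i
    have h2 := word_wrap π rfl i hi hor j hj
    rw [hxi, hx, ← hxi] at h2
    have hji := (word_nodup (π := π)).getElem_inj_iff.1 h2
    have hreci : RecAt (foataWord π) i := by rw [hji]; exact hj.2.1
    by_cases hend : i + 1 = (foataWord π).length
    · -- record at the last position: its value must be 0
      set i₀ : Fin n := ⟨i, by omega⟩ with hi₀
      have hR := (rec_translate π i₀).1 hreci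
      have hv0 : (foataPerm π i₀ : ℕ) = 0 := by
        by_contra h0
        set j₀ : Fin n := (foataPerm π).symm ⟨0, hn⟩ with hj₀
        have hσj₀ : foataPerm π j₀ = ⟨0, hn⟩ := (foataPerm π).apply_symm_apply _
        have hne : j₀ ≠ i₀ := by
          intro he
          rw [he] at hσj₀
          exact h0 (by rw [hσj₀])
        have hlt : j₀ < i₀ := by
          rw [Fin.lt_def]
          have h1 : (j₀ : ℕ) < n := j₀.isLt
          have h2 : (j₀ : ℕ) ≠ (i₀ : ℕ) := fun he => hne (Fin.val_injective he)
          have h3 : (i₀ : ℕ) = n - 1 := by simp [hi₀]; omega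
          omega
        have := hR j₀ hlt
        rw [hσj₀] at this
        exact absurd this (by simp [Fin.lt_def])
      exact hT.2 ⟨i₀, by simp [hi₀]; omega, hv0⟩
    · have hrec1 : RecAt (foataWord π) (i+1) := by
        rcases hor with h | h
        · exact absurd h hend
        · exact h
      have hi1 : i + 1 < n := by
        rcases Nat.lt_or_ge (i+1) (foataWord π).length with h | h
        · omega
        · omega
      refine hT.1 ⟨⟨i, by omega⟩, ⟨i+1, by omega⟩, rfl, ?_, ?_⟩
      · exact (rec_translate π ⟨i, by omega⟩).1 hreci
      · exact (rec_translate π ⟨i+1, by omega⟩).1 hrec1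

lemma foataPerm_injective : Function.Injective (foataPerm (n := n)) := by
  intro π π' h
  have hw : foataWord π = foataWord π' := by
    rw [← foataPerm_spec π, ← foataPerm_spec π', h]
  refine Equiv.ext fun x => ?_
  obtain ⟨i, hi, hxi⟩ := List.mem_iff_getElem.1 (mem_word (π := π) x)
  by_cases hc : i + 1 < (foataWord π).length ∧ ¬ RecAt (foataWord π) (i+1)
  · have h1 := word_succ π rfl i hc.1 hc.2
    have h2 := word_succ π' hw i hc.1 hc.2
    rw [hxi] at h1 h2
    rw [h1, h2]
  · have hor : i + 1 = (foataWord π).length ∨ RecAt (foataWord π) (i+1) := by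
      rcases Nat.lt_or_ge (i+1) (foataWord π).length with h | h
      · right; by_contra h2; exact hc ⟨h, h2⟩
      · left; omega
    obtain ⟨j, hj⟩ := headAt_exists (foataWord π) i
    have h1 := word_wrap π rfl i hi hor j hj
    have h2 := word_wrap π' hw i hi hor j hj
    rw [hxi] at h1 h2
    rw [h1, h2]

lemma foataPerm_surjective : Function.Surjective (foataPerm (n := n)) :=
  (Finite.injective_iff_bijective.mp foataPerm_injective).2

end FoataAux

open FoataAux

/-- Foata's fundamental transformation restricts to a bijection between derangements
and permutations `σ` with no two consecutive left-to-right minima and with the last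
value of `σ` not being the minimum. -/
theorem foata_bijOn_derangements {n : ℕ} :
    Set.BijOn (foataPerm (n := n)) {π : Equiv.Perm (Fin n) | ∀ i, π i ≠ i}
      {σ : Equiv.Perm (Fin n) |
        (¬ ∃ i i' : Fin n, (i' : ℕ) = (i : ℕ) + 1 ∧
          (∀ j, j < i → σ i < σ j) ∧ (∀ j, j < i' → σ i' < σ j)) ∧
        ¬ ∃ i : Fin n, (i : ℕ) = n - 1 ∧ (σ i : ℕ) = 0} := by
  refine ⟨?_, foataPerm_injective.injOn, ?_⟩
  · intro π hπ
    exact mapsTo_aux π hπ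
  · intro σ hσ
    obtain ⟨π, hπ⟩ := foataPerm_surjective σ
    refine ⟨π, ?_, hπ⟩
    apply rev_aux
    rw [hπ]
    exact hσ
end

section
/- Let A(x) = \sum_{n≥0} a_2(n,0) x^n be the (formal) generating function for permutations with no adjacent transpositions in their cycle decomposition. Then A satisfies the differential equation x^2(1+x^2)A'(x) - (1+x^2)(1-x-x^2)A(x) + 1 - x^2 = 0 with A(0) = 1. -/
open Finset Equiv Nat

theorem card_perm_eqOn_support {α : Type*} [Fintype α] [DecidableEq α] (τ : Perm α) :
    #{π : Perm α | ∀ x ∈ τ.support, π x = τ x} = (Fintype.card α - #τ.support)! := by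
  -- `π ↦ π * τ⁻¹` identifies these permutations with those fixing `τ.support` pointwise,
  -- that is, with the permutations of its complement.
  have hfix :
      #{σ : Perm α | ∀ x ∈ τ.support, σ x = x} = (Fintype.card α - #τ.support)! := by
    rw [← Fintype.card_subtype, ← Fintype.card_congr ((Perm.subtypeEquivSubtypePerm
      (· ∉ τ.support)).trans (subtypeEquivRight (by simp))), Fintype.card_perm,
      Fintype.card_subtype_compl, Fintype.card_coe]
  rw [← hfix]
  refine card_bij' (fun π _ => π * τ⁻¹) (fun σ _ => σ * τ) (fun π hπ => ?_)
    (fun σ hσ => ?_) (by simp) (by simp)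
  · rw [mem_filter] at hπ ⊢
    refine ⟨mem_univ _, fun x hx => ?_⟩
    obtain ⟨y, rfl⟩ := τ.surjective x
    simpa using hπ.2 y (Perm.apply_mem_support.1 hx)
  · rw [mem_filter] at hσ ⊢
    refine ⟨mem_univ _, fun x hx => ?_⟩
    rw [Perm.mul_apply, hσ.2 _ (Perm.apply_mem_support.2 hx)]

def IsSeparated (t : Finset ℕ) : Prop := ∀ i ∈ t, i + 1 ∉ t

instance : DecidablePred IsSeparated :=
  fun t => inferInstanceAs (Decidable (∀ i ∈ t, i + 1 ∉ t))

def separatedSets (m k : ℕ) : Finset (Finset ℕ) :=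
  {t ∈ powersetCard k (range m) | IsSeparated t}

theorem mem_separatedSets {m k : ℕ} {t : Finset ℕ} :
    t ∈ separatedSets m k ↔ (∀ i ∈ t, i < m) ∧ #t = k ∧ IsSeparated t := by
  simp [separatedSets, subset_iff, and_assoc]

theorem filter_notMem_separatedSets (m k : ℕ) :
    {t ∈ separatedSets (m + 2) k | m + 1 ∉ t} = separatedSets (m + 1) k := by
  ext t
  simp only [mem_filter, mem_separatedSets]
  constructor
  · rintro ⟨⟨hlt, hk, hs⟩, hm⟩
    refine ⟨fun i hi => ?_, hk, hs⟩
    have := hlt i hi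
    have : i ≠ m + 1 := by rintro rfl; exact hm hi
    omega
  · rintro ⟨hlt, hk, hs⟩
    exact ⟨⟨fun i hi => by have := hlt i hi; omega, hk, hs⟩,
      fun h => by have := hlt _ h; omega⟩

theorem card_filter_mem_separatedSets (m k : ℕ) :
    #{t ∈ separatedSets (m + 2) (k + 1) | m + 1 ∈ t} = #(separatedSets m k) := by
  refine card_nbij' (·.erase (m + 1)) (insert (m + 1)) (fun t ht => ?_) (fun t ht => ?_)
    (fun t ht => ?_) (fun t ht => ?_)
  all_goals
    simp only [coe_filter, mem_separatedSets, Set.mem_ofPred_eq, mem_coe, IsSeparated] at ht ⊢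
  · obtain ⟨⟨hlt, hk, hs⟩, hm⟩ := ht
    refine ⟨fun i hi => ?_, by rw [card_erase_of_mem hm, hk]; rfl, fun i hi hi' => ?_⟩
    · rw [mem_erase] at hi
      have := hlt i hi.2
      have : i ≠ m := fun h => hs i hi.2 (h ▸ hm)
      omega
    · exact hs i (mem_of_mem_erase hi) (mem_of_mem_erase hi')
  · obtain ⟨hlt, hk, hs⟩ := ht
    have hm : m + 1 ∉ t := fun h => by have := hlt _ h; omega
    refine ⟨⟨fun i hi => ?_, by rw [card_insert_of_notMem hm, hk], fun i hi hi' => ?_⟩,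
      mem_insert_self _ _⟩
    · rcases mem_insert.1 hi with rfl | hi
      · omega
      · have := hlt i hi; omega
    · rcases mem_insert.1 hi with rfl | hi <;> rcases mem_insert.1 hi' with h | hi'
      · omega
      · have := hlt _ hi'; omega
      · have := hlt _ hi; omega
      · exact hs i hi hi'
  · exact insert_erase ht.2
  · exact erase_insert fun h => by have := ht.1 _ h; omega

theorem card_separatedSets (m k : ℕ) : #(separatedSets m k) = (m + 1 - k).choose k := by
  induction m using Nat.twoStepInduction generalizing k with
  | zero =>
    rcases k with _ | k
    · decide
    · simp [separatedSets]
  | one =>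
    rcases k with _ | _ | k
    · decide
    · decide
    · simp [separatedSets, powersetCard_eq_filter]
  | more m ih₀ ih₁ =>
    cases k with
    | zero => simp [separatedSets, IsSeparated, filter_singleton]
    | succ k =>
      rw [← card_filter_add_card_filter_not (p := (m + 1 ∈ ·)), card_filter_mem_separatedSets,
        filter_notMem_separatedSets, ih₀, ih₁]
      rcases le_or_gt k (m + 1) with h | h
      · rw [show m + 2 + 1 - (k + 1) = m + 1 - k + 1 by omega, Nat.choose_succ_succ',
          show m + 1 + 1 - (k + 1) = m + 1 - k by omega, add_comm]
      · simp [show m + 1 - k = 0 by omega, show m + 2 + 1 - (k + 1) = 0 by omega,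
          Nat.choose_eq_zero_of_lt (show 0 < k by omega)]

def pairSwap (t : Finset ℕ) (x : ℕ) : ℕ :=
  if x ∈ t then x + 1 else if x ≠ 0 ∧ x - 1 ∈ t then x - 1 else x

section pairSwap
variable {t : Finset ℕ}

theorem pairSwap_of_mem {i : ℕ} (hi : i ∈ t) : pairSwap t i = i + 1 := if_pos hi

theorem pairSwap_add_one_of_mem (hs : IsSeparated t) {i : ℕ} (hi : i ∈ t) :
    pairSwap t (i + 1) = i := by
  simp [pairSwap, hs i hi, hi]

theorem pairSwap_ne_self_iff {x : ℕ} :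
    pairSwap t x ≠ x ↔ x ∈ t ∨ (x ≠ 0 ∧ x - 1 ∈ t) := by
  unfold pairSwap; split_ifs <;> grind

theorem pairSwap_involutive (hs : IsSeparated t) : Function.Involutive (pairSwap t) := by
  intro x
  unfold pairSwap
  split_ifs <;> grind [IsSeparated]

theorem pairSwap_lt {n : ℕ} (ht : ∀ i ∈ t, i + 1 < n) {x : ℕ} (hx : x < n) :
    pairSwap t x < n := by
  unfold pairSwap
  split_ifs <;> grind

end pairSwap

def pairPerm {n : ℕ} (t : Finset ℕ) (ht : ∀ i ∈ t, i + 1 < n) (hs : IsSeparated t) :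
    Perm (Fin n) :=
  Function.Involutive.toPerm (fun x => ⟨pairSwap t x, pairSwap_lt ht x.2⟩)
    fun x => Fin.ext (pairSwap_involutive hs x)

section pairPerm
variable {n : ℕ} {t : Finset ℕ} (ht : ∀ i ∈ t, i + 1 < n) (hs : IsSeparated t)

theorem val_pairPerm (x : Fin n) : (pairPerm t ht hs x : ℕ) = pairSwap t x := rfl

theorem card_support_pairPerm : #(pairPerm t ht hs).support = 2 * #t := by
  have hmap :
      (pairPerm t ht hs).support.map Fin.valEmbedding = t ∪ t.map (addRightEmbedding 1) := by
    ext y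
    simp only [mem_map, Perm.mem_support, Fin.valEmbedding_apply, mem_union,
      addRightEmbedding_apply, Fin.ne_iff_vne, val_pairPerm]
    constructor
    · rintro ⟨x, hx, rfl⟩
      rcases pairSwap_ne_self_iff.1 hx with hx | ⟨hx₀, hx⟩
      · exact .inl hx
      · exact .inr ⟨_, hx, by omega⟩
    · rintro (hy | ⟨i, hi, rfl⟩)
      · exact ⟨⟨y, by grind⟩, pairSwap_ne_self_iff.2 (.inl hy), rfl⟩
      · exact ⟨⟨i + 1, ht i hi⟩, pairSwap_ne_self_iff.2 (.inr (by simpa using hi)), rfl⟩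
  have hdisj : Disjoint t (t.map (addRightEmbedding 1)) := by
    simp only [disjoint_left, mem_map, addRightEmbedding_apply]
    rintro _ hi ⟨j, hj, rfl⟩
    exact hs j hj hi
  rw [← card_map, hmap, card_union_of_disjoint hdisj, card_map, two_mul]

end pairPerm

instance {n q : ℕ} (π : Perm (Fin n)) (i : ℕ) : Decidable (IsAdjCycle q π i) := by
  unfold IsAdjCycle; infer_instance

theorem isAdjCycle_two_iff {n i : ℕ} {π : Perm (Fin n)} :
    IsAdjCycle 2 π i ↔
      i + 1 < n ∧ ∀ j : Fin n,
        ((j : ℕ) = i → (π j : ℕ) = i + 1) ∧ ((j : ℕ) = i + 1 → (π j : ℕ) = i) := by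
  unfold IsAdjCycle
  constructor
  · rintro ⟨hn, h₁, h₂⟩
    exact ⟨by omega, fun j => ⟨fun hj => by grind, fun hj => h₂ j (by omega)⟩⟩
  · rintro ⟨hn, h⟩
    exact ⟨by omega, fun j hj hj' => by grind, fun j hj => (h j).2 (by omega)⟩

def adjTranspositionSet (n i : ℕ) : Finset (Perm (Fin n)) := {π | IsAdjCycle 2 π i}

theorem mem_inf_adjTranspositionSet {n : ℕ} {t : Finset ℕ} (ht : ∀ i ∈ t, i + 1 < n)
    (hs : IsSeparated t) {π : Perm (Fin n)} :
    π ∈ t.inf (adjTranspositionSet n) ↔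
      ∀ x ∈ (pairPerm t ht hs).support, π x = pairPerm t ht hs x := by
  simp only [mem_inf, adjTranspositionSet, mem_filter_univ, isAdjCycle_two_iff, Perm.mem_support,
    Fin.ne_iff_vne, Fin.ext_iff, val_pairPerm]
  constructor
  · intro h x hx
    rcases pairSwap_ne_self_iff.1 hx with hx | ⟨hx₀, hx⟩
    · rw [pairSwap_of_mem hx]
      exact ((h _ hx).2 x).1 rfl
    · have hp : pairSwap t x = x - 1 := by
        rw [← pairSwap_add_one_of_mem hs hx, Nat.sub_add_cancel (by omega)]
      rw [hp]
      exact ((h _ hx).2 x).2 (by omega)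
  · intro h i hi
    refine ⟨ht i hi, fun j => ⟨fun hj => ?_, fun hj => ?_⟩⟩
    · have hp : pairSwap t j = i + 1 := by rw [hj, pairSwap_of_mem hi]
      rw [h j (by omega), hp]
    · have hp : pairSwap t j = i := by rw [hj, pairSwap_add_one_of_mem hs hi]
      rw [h j (by omega), hp]

theorem inf_adjTranspositionSet_eq_empty {n : ℕ} {t : Finset ℕ} (hs : ¬ IsSeparated t) :
    t.inf (adjTranspositionSet n) = ∅ := by
  obtain ⟨i, hi, hi'⟩ : ∃ i ∈ t, i + 1 ∈ t := by simpa [IsSeparated] using hs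
  refine eq_empty_of_forall_notMem fun π hπ => ?_
  simp only [mem_inf, adjTranspositionSet, mem_filter_univ, isAdjCycle_two_iff] at hπ
  obtain ⟨hn, h⟩ := hπ _ hi'
  have h₁ := (h ⟨i + 1, by omega⟩).1 rfl
  have h₂ := ((hπ _ hi).2 ⟨i + 1, by omega⟩).2 rfl
  omega

theorem card_inf_adjTranspositionSet {n : ℕ} {t : Finset ℕ} (ht : ∀ i ∈ t, i + 1 < n)
    (hs : IsSeparated t) : #(t.inf (adjTranspositionSet n)) = (n - 2 * #t)! := by
  have hinf : t.inf (adjTranspositionSet n) =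
      ({π | ∀ x ∈ (pairPerm t ht hs).support, π x = pairPerm t ht hs x} :
        Finset (Perm (Fin n))) := by
    ext π
    rw [mem_inf_adjTranspositionSet ht hs, mem_filter_univ]
  rw [hinf, ← card_support_pairPerm ht hs]
  convert card_perm_eqOn_support (pairPerm t ht hs)
  exact (Fintype.card_fin n).symm

def incExcTerm (n k : ℕ) : ℚ := (-1) ^ k * (n - k).choose k * (n - 2 * k)!

def incExcSum (n : ℕ) : ℚ := ∑ k ∈ range (n + 1), incExcTerm n k

theorem incExcTerm_eq_zero {n k : ℕ} (h : n < 2 * k) : incExcTerm n k = 0 := by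
  simp [incExcTerm, Nat.choose_eq_zero_of_lt (show n - k < k by omega)]

theorem incExcTerm_eq_div {n k : ℕ} (h : 2 * k ≤ n) :
    incExcTerm n k = (-1) ^ k * (n - k)! / k ! := by
  rw [incExcTerm, eq_div_iff (by positivity), mul_assoc, mul_assoc,
    ← Nat.choose_mul_factorial_mul_factorial (show k ≤ n - k by omega),
    show n - k - k = n - 2 * k by omega]
  push_cast
  ring

theorem incExcTerm_add_four_add_two (m k : ℕ) :
    incExcTerm (m + 4) (k + 2) =
      (m + 4) * incExcTerm (m + 3) (k + 2) + (m + 2) * incExcTerm (m + 1) (k + 1) +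
        incExcTerm m k := by
  rcases lt_trichotomy m (2 * k) with h | rfl | h
  · simp [incExcTerm_eq_zero, show m + 4 < 2 * (k + 2) by omega,
      show m + 3 < 2 * (k + 2) by omega, show m + 1 < 2 * (k + 1) by omega, h]
  · rw [incExcTerm_eq_zero (n := 2 * k + 3) (by omega),
      incExcTerm_eq_zero (n := 2 * k + 1) (by omega), incExcTerm_eq_div (by omega),
      incExcTerm_eq_div (n := 2 * k) (by omega)]
    simp [show 2 * k + 4 - (k + 2) = k + 2 by omega, show 2 * k - k = k by omega, pow_add,
      Nat.factorial_ne_zero]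
  · obtain ⟨a, rfl⟩ : ∃ a, m = k + a := ⟨m - k, by omega⟩
    rw [incExcTerm_eq_div (by omega), incExcTerm_eq_div (by omega), incExcTerm_eq_div (by omega),
      incExcTerm_eq_div (by omega), show k + a + 4 - (k + 2) = a + 2 by omega,
      show k + a + 3 - (k + 2) = a + 1 by omega,
      show k + a + 1 - (k + 1) = a by omega, show k + a - k = a by omega]
    simp only [Nat.factorial_succ]
    push_cast
    field_simp
    ring

theorem sum_range_incExcTerm {n M : ℕ} (h : n < 2 * M) :
    ∑ k ∈ range M, incExcTerm n k = incExcSum n := by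
  have hvan : ∀ k ≥ n / 2 + 1, incExcTerm n k = 0 := fun k hk => incExcTerm_eq_zero (by omega)
  rw [incExcSum, eventually_constant_sum hvan (by omega),
    eventually_constant_sum hvan (n := n + 1) (by omega)]

theorem incExcSum_add_four (m : ℕ) :
    incExcSum (m + 4) =
      (m + 4) * incExcSum (m + 3) + (m + 2) * incExcSum (m + 1) + incExcSum m := by
  have split₂ : ∀ n ≤ m + 4, incExcSum n =
      ∑ k ∈ range (m + 3), incExcTerm n (k + 2) + incExcTerm n 1 + incExcTerm n 0 := by
    intro n hn
    rw [← sum_range_incExcTerm (M := m + 5) (by omega), sum_range_succ', sum_range_succ']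
  have split₁ : incExcSum (m + 1) =
      ∑ k ∈ range (m + 3), incExcTerm (m + 1) (k + 1) + incExcTerm (m + 1) 0 := by
    rw [← sum_range_incExcTerm (M := m + 4) (by omega), sum_range_succ']
  rw [split₂ (m + 4) le_rfl, split₂ (m + 3) (by omega), split₁,
    ← sum_range_incExcTerm (n := m) (M := m + 3) (by omega)]
  simp only [incExcTerm_add_four_add_two, sum_add_distrib, ← mul_sum]
  have h₀ : ∀ n, incExcTerm n 0 = n ! := fun n => by simp [incExcTerm]
  have h₁ : ∀ n, incExcTerm (n + 2) 1 = -(n + 1)! := fun n => by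
    simp [incExcTerm_eq_div (show 2 * 1 ≤ n + 2 by omega)]
  rw [h₀, h₀, h₀, h₁, h₁]
  simp only [Nat.factorial_succ]
  push_cast
  ring

theorem sum_powersetCard_card_inf_adjTranspositionSet (n k : ℕ) :
    ∑ t ∈ powersetCard k (range (n - 1)), ((-1) ^ #t * #(t.inf (adjTranspositionSet n)) : ℚ) =
      incExcTerm n k := by
  rw [← sum_filter_add_sum_filter_not _ IsSeparated]
  have hsep : ∀ t ∈ {t ∈ powersetCard k (range (n - 1)) | IsSeparated t},
      ((-1) ^ #t * #(t.inf (adjTranspositionSet n)) : ℚ) = (-1) ^ k * (n - 2 * k)! := by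
    intro t ht
    rw [mem_filter, mem_powersetCard] at ht
    rw [card_inf_adjTranspositionSet (fun i hi => by have := mem_range.1 (ht.1.1 hi); omega) ht.2,
      ht.1.2]
  have hnonsep : ∀ t ∈ {t ∈ powersetCard k (range (n - 1)) | ¬ IsSeparated t},
      ((-1) ^ #t * #(t.inf (adjTranspositionSet n)) : ℚ) = 0 := by
    intro t ht
    rw [inf_adjTranspositionSet_eq_empty (mem_filter.1 ht).2, card_empty, Nat.cast_zero, mul_zero]
  rw [sum_congr rfl hsep, sum_congr rfl hnonsep, sum_const_zero, add_zero, sum_const, nsmul_eq_mul]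
  have hchoose : (n - 1 + 1 - k).choose k = (n - k).choose k := by
    rcases n with _ | n
    · rcases k with _ | k <;> simp
    · rfl
  rw [← separatedSets, card_separatedSets, hchoose, incExcTerm]
  ring

theorem natCard_forall_not_isAdjCycle_two (n : ℕ) :
    (Nat.card {π : Perm (Fin n) // ∀ i, ¬ IsAdjCycle 2 π i} : ℚ) = incExcSum n := by
  have hcompl : Nat.card {π : Perm (Fin n) // ∀ i, ¬ IsAdjCycle 2 π i} =
      #((range (n - 1)).inf fun i => (adjTranspositionSet n i)ᶜ) := by
    rw [← Nat.card_eq_finsetCard]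
    refine Nat.card_congr (subtypeEquivRight fun π => ?_)
    simp only [mem_inf, mem_compl, adjTranspositionSet, mem_filter_univ, mem_range]
    exact ⟨fun h i _ => h i,
      fun h i hi => h i (by have := (isAdjCycle_two_iff.1 hi).1; omega) hi⟩
  rw [hcompl, ← Int.cast_natCast, inclusion_exclusion_card_inf_compl]
  push_cast
  rw [sum_powerset, card_range]
  simp_rw [sum_powersetCard_card_inf_adjTranspositionSet]
  exact sum_range_incExcTerm (by omega)

open PowerSeries in
theorem ode_of_recurrence {R : Type*} [CommRing R] (a : ℕ → R) (h₀ : a 0 = 1) (h₁ : a 1 = 1)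
    (h₂ : a 2 = 1) (h₃ : a 3 = 4)
    (hrec : ∀ m, a (m + 4) = (m + 4) * a (m + 3) + (m + 2) * a (m + 1) + a m) :
    X ^ 2 * (1 + X ^ 2) * d⁄dX R (PowerSeries.mk a)
      - (1 + X ^ 2) * (1 - X - X ^ 2) * PowerSeries.mk a + 1 - X ^ 2 = 0 := by
  set A := PowerSeries.mk a
  have hexpand : X ^ 2 * (1 + X ^ 2) * d⁄dX R A - (1 + X ^ 2) * (1 - X - X ^ 2) * A + 1 - X ^ 2
      = X ^ 2 * d⁄dX R A + X ^ 4 * d⁄dX R A + X ^ 1 * A + X ^ 3 * A + X ^ 4 * A + 1 - A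
          - X ^ 2 := by
    ring
  rw [hexpand]
  ext n
  rcases n with _ | _ | _ | _ | m <;>
    simp [A, coeff_X_pow_mul', coeff_X_pow, coeff_one, coeff_derivative,
      -coeff_zero_eq_constantCoeff, coeff_zero_X_mul, h₀, h₁, h₂, h₃, hrec] <;>
    ring

open PowerSeries in
/-- The generating function `A(x)` of the numbers of permutations with no adjacent
transposition in their cycle decomposition satisfies
`x²(1+x²)A'(x) - (1+x²)(1-x-x²)A(x) + 1 - x² = 0` with `A(0) = 1`. -/
theorem genFun_no_adjacent_transpositions_ODE :
    let A : PowerSeries ℚ := PowerSeries.mk fun m =>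
      ((Nat.card {π : Equiv.Perm (Fin m) // ∀ i : ℕ, ¬ IsAdjCycle 2 π i}) : ℚ)
    X ^ 2 * (1 + X ^ 2) * (d⁄dX ℚ A) - (1 + X ^ 2) * (1 - X - X ^ 2) * A
        + 1 - X ^ 2 = 0 ∧
      PowerSeries.constantCoeff A = 1 := by
  intro A
  have hA : A = PowerSeries.mk incExcSum := by
    ext m
    rw [coeff_mk, coeff_mk, natCard_forall_not_isAdjCycle_two]
  have h₀ : incExcSum 0 = 1 := by simp [incExcSum, incExcTerm]
  rw [hA]
  refine ⟨ode_of_recurrence _ h₀ ?_ ?_ ?_ incExcSum_add_four, by simp [h₀]⟩ <;>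
    simp [incExcSum, incExcTerm, sum_range_succ] <;> norm_num
end

section
/- For n ≥ 2, the number of permutations of {1,...,n} avoiding the mesh pattern p equals a_2(n,0) + a_2(n-2,0), where a_2(m,0) is the number of permutations of {1,...,m} with no adjacent transposition (cycle of the form (i,i+1)) in their cycle decomposition, and avoiding p means: there is no triple of positions i < j < k with σ(i) < σ(k) < σ(j) such that the relevant shaded regions of p are empty (pattern p = mesh pattern with points (1,1),(2,3),(3,2) and shaded cells (0,2),(0,3),(1,2),(1,3),(2,0),(2,1),(2,2),(2,3),(3,1),(3,2)). -/
/-- `l` lies in the region of cell `(a, b)` for an occurrence of a mesh pattern with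
underlying classical pattern `132` at positions `i₁ < i₂ < i₃` in `σ`
(rows determined by the sorted values `σ i₁ < σ i₃ < σ i₂`). -/
def InReg132 {n : ℕ} (σ : Equiv.Perm (Fin n)) (i1 i2 i3 : Fin n) (a b : ℕ) (l : Fin n) :
    Prop :=
  ((a = 0 ∧ l < i1) ∨ (a = 1 ∧ i1 < l ∧ l < i2) ∨ (a = 2 ∧ i2 < l ∧ l < i3) ∨
      (a = 3 ∧ i3 < l)) ∧
  ((b = 0 ∧ σ l < σ i1) ∨ (b = 1 ∧ σ i1 < σ l ∧ σ l < σ i3) ∨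
      (b = 2 ∧ σ i3 < σ l ∧ σ l < σ i2) ∨ (b = 3 ∧ σ i2 < σ l))

/-- Occurrence of the mesh pattern with underlying pattern `132` and shaded cells `R`. -/
def Occ132 {n : ℕ} (R : List (ℕ × ℕ)) (σ : Equiv.Perm (Fin n)) (i1 i2 i3 : Fin n) : Prop :=
  i1 < i2 ∧ i2 < i3 ∧ σ i1 < σ i3 ∧ σ i3 < σ i2 ∧
    ∀ c ∈ R, ∀ l : Fin n, ¬ InReg132 σ i1 i2 i3 c.1 c.2 l

/-- Avoidance of a mesh pattern with underlying classical pattern `132`. -/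
def Avoid132 {n : ℕ} (R : List (ℕ × ℕ)) (σ : Equiv.Perm (Fin n)) : Prop :=
  ¬ ∃ i1 i2 i3 : Fin n, Occ132 R σ i1 i2 i3

/-- The shaded cells of the mesh pattern `p`. -/
def cellsP : List (ℕ × ℕ) :=
  [(0,2),(0,3),(1,2),(1,3),(2,0),(2,1),(2,2),(2,3),(3,1),(3,2)]

/-- The shaded cells of the mesh pattern `s₂'`. -/
def cellsS2' : List (ℕ × ℕ) :=
  [(0,1),(0,2),(0,3),(1,1),(1,2),(1,3),(2,0),(2,1),(2,2),(2,3),(3,1),(3,2)]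

/-
All positions and values are `0`-indexed. A permutation `σ` contains `p` exactly when, for some
position `t ≥ 1`, the positions `t, t + 1` carry the two smallest values exceeding everything to
the left of `t`, in decreasing order; it has the cycle `(i, i+1)` exactly when the positions
`i, i + 1` carry the values `i + 1, i`. In both cases events at consecutive positions exclude each
other, and removing the pairs shows that any `k` non-consecutive events are realised by exactly
`(n - 2k)!` permutations. Inclusion–exclusion therefore expresses both counts through
`pairSum n m = ∑ (-1)^|S| (n - 2|S|)!` over non-consecutive `S ⊆ {0, …, m-1}`: indexing the events of `p`
by `t - 1`, the avoiders of `p` number `pairSum n (n-2)`, and `a₂(n,0) = pairSum n (n-1)`. Splitting the last sum according to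
whether `n - 2 ∈ S` gives `pairSum n (n-1) = pairSum n (n-2) - pairSum (n-2) (n-3)`.
-/

open Finset Equiv
open scoped Nat

namespace MeshPatternP

theorem card_forall_not_eq_sum {α ι : Type*} [Fintype α] (s : Finset ι) (P : ι → α → Prop) :
    (Nat.card {a // ∀ i ∈ s, ¬ P i a} : ℤ) =
      ∑ t ∈ s.powerset, (-1) ^ #t * (Nat.card {a // ∀ i ∈ t, P i a} : ℤ) := by
  classical
  simp only [Nat.card_eq_fintype_card, Fintype.card_subtype]
  convert inclusion_exclusion_card_inf_compl s (fun i => ({a | P i a} : Finset α)) using 5 <;>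
    ext <;> simp [mem_inf]

def NoConsecutive (S : Finset ℕ) : Prop := ∀ i ∈ S, i + 1 ∉ S

open Classical in
noncomputable def pairTerm (n : ℕ) (S : Finset ℕ) : ℤ :=
  if NoConsecutive S then (-1) ^ #S * ((n - 2 * #S)! : ℤ) else 0

noncomputable def pairSum (n m : ℕ) : ℤ := ∑ S ∈ (range m).powerset, pairTerm n S

lemma pairTerm_insert {n m : ℕ} {S : Finset ℕ} (hS : ∀ i ∈ S, i + 2 ≤ m) :
    pairTerm n (insert m S) = -pairTerm (n - 2) S := by
  have hm : m ∉ S := fun h => by have := hS m h; omega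
  have hcons : NoConsecutive (insert m S) ↔ NoConsecutive S := by
    simp only [NoConsecutive, mem_insert, forall_eq_or_imp, not_or]
    constructor
    · exact fun h i hi => (h.2 i hi).2
    · refine fun h => ⟨⟨by omega, fun h' => by have := hS _ h'; omega⟩, fun i hi => ⟨?_, h i hi⟩⟩
      have := hS i hi
      omega
  have hfac : n - 2 * (#S + 1) = n - 2 - 2 * #S := by omega
  unfold pairTerm
  by_cases h : NoConsecutive S
  · rw [if_pos (hcons.2 h), if_pos h, card_insert_of_notMem hm, hfac]
    ring
  · rw [if_neg (mt hcons.1 h), if_neg h, neg_zero]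

lemma pairTerm_eq_zero {n i : ℕ} {S : Finset ℕ} (hi : i ∈ S) (hi' : i + 1 ∈ S) :
    pairTerm n S = 0 :=
  if_neg fun h => h i hi hi'

lemma pairSum_succ (n m : ℕ) : pairSum n (m + 1) = pairSum n m - pairSum (n - 2) (m - 1) := by
  have hinsert : ∑ S ∈ (range m).powerset, pairTerm n (insert m S) = -pairSum (n - 2) (m - 1) := by
    rw [pairSum, ← sum_neg_distrib]
    calc ∑ S ∈ (range m).powerset, pairTerm n (insert m S)
        = ∑ S ∈ (range (m - 1)).powerset, pairTerm n (insert m S) := by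
          refine (sum_subset (powerset_mono.2 (range_subset_range.2 (m.sub_le 1))) ?_).symm
          intro S hS hS'
          simp only [mem_powerset, subset_iff, mem_range, not_forall] at hS hS'
          obtain ⟨i, hi, hi'⟩ := hS'
          have hm : i + 1 = m := by have := hS hi; omega
          exact pairTerm_eq_zero (mem_insert_of_mem hi) (hm ▸ mem_insert_self m S)
      _ = ∑ S ∈ (range (m - 1)).powerset, -pairTerm (n - 2) S := by
          refine sum_congr rfl fun S hS => pairTerm_insert fun i hi => ?_
          have := mem_range.1 (mem_powerset.1 hS hi)
          omega
  rw [pairSum, range_add_one, sum_powerset_insert notMem_range_self, hinsert, sub_eq_add_neg]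
  rfl

lemma card_forall_not_eq_pairSum {α : Type*} [Fintype α] (E : ℕ → α → Prop) {n m : ℕ}
    (hcount : ∀ S ⊆ range m, NoConsecutive S → Nat.card {a // ∀ i ∈ S, E i a} = (n - 2 * #S)!)
    (hconsec : ∀ i a, E i a → ¬ E (i + 1) a) :
    (Nat.card {a // ∀ i ∈ range m, ¬ E i a} : ℤ) = pairSum n m := by
  rw [card_forall_not_eq_sum, pairSum]
  refine sum_congr rfl fun S hS => ?_
  unfold pairTerm
  split_ifs with h
  · rw [hcount S (mem_powerset.1 hS) h]
  · obtain ⟨i, hi, hi'⟩ : ∃ i ∈ S, i + 1 ∈ S := by simpa [NoConsecutive] using h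
    have : IsEmpty {a // ∀ i ∈ S, E i a} := ⟨fun a => hconsec i a.1 (a.2 i hi) (a.2 _ hi')⟩
    rw [Nat.card_of_isEmpty, Nat.cast_zero, mul_zero]

section PairAt

variable {n t v : ℕ}

def PairAt (σ : Perm (Fin n)) (t v : ℕ) : Prop :=
  ∃ x y : Fin n, (x : ℕ) = t ∧ (y : ℕ) = t + 1 ∧ (σ x : ℕ) = v + 1 ∧ (σ y : ℕ) = v

lemma PairAt.apply_of_eq {σ : Perm (Fin n)} (h : PairAt σ t v) {x : Fin n} (hx : (x : ℕ) = t) :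
    (σ x : ℕ) = v + 1 := by
  obtain ⟨x', -, hx', -, hσx, -⟩ := h
  rw [← hσx, Fin.ext (hx.trans hx'.symm)]

lemma PairAt.apply_of_eq_succ {σ : Perm (Fin n)} (h : PairAt σ t v) {x : Fin n}
    (hx : (x : ℕ) = t + 1) : (σ x : ℕ) = v := by
  obtain ⟨-, y, -, hy, -, hσy⟩ := h
  rw [← hσy, Fin.ext (hx.trans hy.symm)]

lemma PairAt.succ_lt {σ : Perm (Fin n)} (h : PairAt σ t v) : t + 1 < n := by
  obtain ⟨-, y, -, hy, -⟩ := h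
  exact hy ▸ y.isLt

lemma PairAt.add_two_le {σ : Perm (Fin n)} (h : PairAt σ t v) : v + 2 ≤ n := by
  obtain ⟨x, -, -, -, hσx, -⟩ := h
  have := (σ x).isLt
  omega

def prefixSup (σ : Perm (Fin n)) (t : ℕ) : ℕ :=
  ({x | (x : ℕ) < t} : Finset (Fin n)).sup fun x => (σ x : ℕ) + 1

variable (σ : Perm (Fin n))

lemma lt_prefixSup {x : Fin n} (hx : (x : ℕ) < t) : (σ x : ℕ) < prefixSup σ t :=
  Nat.lt_of_succ_le (le_sup (f := fun x => (σ x : ℕ) + 1) (by simpa using hx))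

lemma prefixSup_le_iff : prefixSup σ t ≤ v ↔ ∀ x : Fin n, (x : ℕ) < t → (σ x : ℕ) < v := by
  simp [prefixSup, Finset.sup_le_iff]

lemma prefixSup_le_card : prefixSup σ t ≤ n :=
  (prefixSup_le_iff σ).2 fun x _ => (σ x).isLt

lemma exists_prefixSup_eq (h0 : 0 < t) (htn : t ≤ n) :
    ∃ x : Fin n, (x : ℕ) < t ∧ prefixSup σ t = σ x + 1 := by
  obtain ⟨x, hx, hsup⟩ := exists_mem_eq_sup ({x | (x : ℕ) < t} : Finset (Fin n))
    ⟨⟨0, by omega⟩, by simpa using h0⟩ fun x => (σ x : ℕ) + 1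
  exact ⟨x, by simpa using hx, hsup⟩

end PairAt

section Insertion

variable {m c t b : ℕ}

def skipPair (c : ℕ) (j : Fin m) : Fin (m + 2) :=
  ⟨if (j : ℕ) < c then j else j + 2, by split_ifs <;> omega⟩

lemma skipPair_val (c : ℕ) (j : Fin m) :
    (skipPair c j : ℕ) = if (j : ℕ) < c then (j : ℕ) else j + 2 := rfl

lemma skipPair_ne (c : ℕ) (j : Fin m) : (skipPair c j : ℕ) ≠ c ∧ (skipPair c j : ℕ) ≠ c + 1 := by
  rw [skipPair_val]; split_ifs <;> omega

lemma skipPair_injective (c : ℕ) : Function.Injective (skipPair (m := m) c) := by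
  intro i j h
  have h' := congrArg Fin.val h
  rw [skipPair_val, skipPair_val] at h'
  ext
  split_ifs at h' <;> omega

lemma skipPair_val_eq_iff {v : ℕ} {w : Fin m} (h : v < c ∨ (w : ℕ) < c) :
    (skipPair c w : ℕ) = v ↔ (w : ℕ) = v := by
  rw [skipPair_val]; split_ifs <;> omega

lemma skipPair_val_lt_iff (w : Fin m) : (skipPair c w : ℕ) < c ↔ (w : ℕ) < c := by
  rw [skipPair_val]; split_ifs <;> omega

def dropPair (hc : c ≤ m) (x : Fin (m + 2)) (hx : (x : ℕ) ≠ c ∧ (x : ℕ) ≠ c + 1) : Fin m :=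
  ⟨if (x : ℕ) < c then x else x - 2, by split_ifs <;> omega⟩

lemma skipPair_dropPair (hc : c ≤ m) (x : Fin (m + 2)) (hx : (x : ℕ) ≠ c ∧ (x : ℕ) ≠ c + 1) :
    skipPair c (dropPair hc x hx) = x := by
  ext; simp only [skipPair_val, dropPair]; split_ifs <;> omega

lemma dropPair_skipPair (hc : c ≤ m) (j : Fin m) :
    dropPair hc (skipPair c j) (skipPair_ne c j) = j :=
  skipPair_injective c (skipPair_dropPair hc _ _)

def insertPairFun (ht : t ≤ m) (hb : b ≤ m) (τ : Perm (Fin m)) (x : Fin (m + 2)) :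
    Fin (m + 2) :=
  if hx : (x : ℕ) = t then ⟨b + 1, by omega⟩
  else if hx' : (x : ℕ) = t + 1 then ⟨b, by omega⟩
  else skipPair b (τ (dropPair ht x ⟨hx, hx'⟩))

-- The inverse is the same construction with positions and values exchanged.
lemma insertPairFun_leftInverse (ht : t ≤ m) (hb : b ≤ m) (τ : Perm (Fin m)) :
    Function.LeftInverse (insertPairFun hb ht τ.symm) (insertPairFun ht hb τ) := by
  intro x
  unfold insertPairFun
  by_cases hx : (x : ℕ) = t
  · simp [hx, Fin.ext_iff]
  by_cases hx' : (x : ℕ) = t + 1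
  · simp [hx', Fin.ext_iff]
  simp only [hx, hx', dif_neg, not_false_eq_true, (skipPair_ne b _).1, (skipPair_ne b _).2,
    dropPair_skipPair, symm_apply_apply, skipPair_dropPair]

/-- The permutation of `Fin (m + 2)` obtained from `τ` by inserting the descending pair
`b + 1, b` at positions `t, t + 1`. -/
def insertPair (ht : t ≤ m) (hb : b ≤ m) (τ : Perm (Fin m)) : Perm (Fin (m + 2)) where
  toFun := insertPairFun ht hb τ
  invFun := insertPairFun hb ht τ.symm
  left_inv := insertPairFun_leftInverse ht hb τ
  right_inv := by
    have h := insertPairFun_leftInverse hb ht τ.symm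
    rwa [symm_symm] at h

variable (ht : t ≤ m) (hb : b ≤ m) (τ : Perm (Fin m))

lemma insertPair_apply_of_eq {x : Fin (m + 2)} (hx : (x : ℕ) = t) :
    (insertPair ht hb τ x : ℕ) = b + 1 := by
  simp [insertPair, insertPairFun, hx]

lemma insertPair_apply_of_eq_succ {x : Fin (m + 2)} (hx : (x : ℕ) = t + 1) :
    (insertPair ht hb τ x : ℕ) = b := by
  simp [insertPair, insertPairFun, hx]

lemma insertPair_apply_skipPair (j : Fin m) :
    insertPair ht hb τ (skipPair t j) = skipPair b (τ j) := by
  simp [insertPair, insertPairFun, (skipPair_ne t j).1, (skipPair_ne t j).2, dropPair_skipPair]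

lemma insertPair_apply_of_lt {x : Fin (m + 2)} {j : Fin m} (hxj : (x : ℕ) = j)
    (hx : (x : ℕ) < t) : insertPair ht hb τ x = skipPair b (τ j) := by
  have : x = skipPair t j := Fin.ext (by rw [skipPair_val, if_pos (hxj ▸ hx), hxj])
  rw [this, insertPair_apply_skipPair]

lemma pairAt_insertPair : PairAt (insertPair ht hb τ) t b :=
  ⟨⟨t, by omega⟩, ⟨t + 1, by omega⟩, rfl, rfl, insertPair_apply_of_eq ht hb τ rfl,
    insertPair_apply_of_eq_succ ht hb τ rfl⟩

lemma insertPair_inj {b' : ℕ} {hb' : b' ≤ m} {τ' : Perm (Fin m)}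
    (h : insertPair ht hb τ = insertPair ht hb' τ') : b = b' ∧ τ = τ' := by
  have hbb : b = b' := by
    have h1 := insertPair_apply_of_eq ht hb τ (x := ⟨t, by omega⟩) rfl
    rw [h, insertPair_apply_of_eq ht hb' τ' rfl] at h1
    omega
  subst hbb
  refine ⟨rfl, Equiv.ext fun j => skipPair_injective b ?_⟩
  rw [← insertPair_apply_skipPair ht hb, ← insertPair_apply_skipPair ht hb', h]

lemma exists_insertPair_eq {σ : Perm (Fin (m + 2))} (hσ : PairAt σ t b) :
    ∃ τ, insertPair ht hb τ = σ := by
  have hne : ∀ j : Fin m, (σ (skipPair t j) : ℕ) ≠ b ∧ (σ (skipPair t j) : ℕ) ≠ b + 1 := by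
    intro j
    obtain ⟨x, y, hx, hy, hσx, hσy⟩ := hσ
    have h := skipPair_ne t j
    constructor <;> intro he
    · exact h.2 (by rw [σ.injective (Fin.ext (he.trans hσy.symm)), hy])
    · exact h.1 (by rw [σ.injective (Fin.ext (he.trans hσx.symm)), hx])
  let f : Fin m → Fin m := fun j => dropPair hb (σ (skipPair t j)) (hne j)
  have hf : Function.Injective f := fun i j hij => by
    have := congrArg (skipPair b) hij
    simp only [f, skipPair_dropPair] at this
    exact skipPair_injective t (σ.injective this)
  refine ⟨Equiv.ofBijective f (Finite.injective_iff_bijective.1 hf), Equiv.ext fun z => ?_⟩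
  by_cases hz : (z : ℕ) = t
  · exact Fin.ext (by rw [insertPair_apply_of_eq ht hb _ hz, hσ.apply_of_eq hz])
  by_cases hz' : (z : ℕ) = t + 1
  · exact Fin.ext (by rw [insertPair_apply_of_eq_succ ht hb _ hz', hσ.apply_of_eq_succ hz'])
  rw [← skipPair_dropPair ht z ⟨hz, hz'⟩, insertPair_apply_skipPair, ofBijective_apply,
    skipPair_dropPair]

lemma insertPair_val_eq_iff {x : Fin (m + 2)} {j : Fin m} (hxj : (x : ℕ) = j) (hx : (x : ℕ) < t)
    {v : ℕ} (h : v < b ∨ (τ j : ℕ) < b) : (insertPair ht hb τ x : ℕ) = v ↔ (τ j : ℕ) = v := by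
  rw [insertPair_apply_of_lt ht hb τ hxj hx, skipPair_val_eq_iff h]

lemma pairAt_insertPair_iff {s c : ℕ} (hs : s + 1 < t) (h : c + 1 < b ∨ prefixSup τ t ≤ b) :
    PairAt (insertPair ht hb τ) s c ↔ PairAt τ s c := by
  have key : ∀ (x : Fin (m + 2)) (j : Fin m), (x : ℕ) = j → (x : ℕ) < t → ∀ v ≤ c + 1,
      ((insertPair ht hb τ x : ℕ) = v ↔ (τ j : ℕ) = v) := fun x j hxj hx v hv =>
    insertPair_val_eq_iff ht hb τ hxj hx
      (h.imp (by omega) fun h => (lt_prefixSup τ (hxj ▸ hx)).trans_le h)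
  constructor
  · rintro ⟨x, y, hx, hy, hσx, hσy⟩
    exact ⟨⟨s, by omega⟩, ⟨s + 1, by omega⟩, rfl, rfl,
      (key x _ hx (by omega) _ le_rfl).1 hσx, (key y _ hy (by omega) _ (by omega)).1 hσy⟩
  · rintro ⟨x, y, hx, hy, hτx, hτy⟩
    exact ⟨⟨s, by omega⟩, ⟨s + 1, by omega⟩, rfl, rfl,
      (key _ x hx.symm (by simp; omega) _ le_rfl).2 hτx,
      (key _ y hy.symm (by simp; omega) _ (by omega)).2 hτy⟩

lemma prefixSup_insertPair {s : ℕ} (hs : s ≤ t) (h : prefixSup τ t ≤ b) :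
    prefixSup (insertPair ht hb τ) s = prefixSup τ s := by
  have hval : ∀ (x : Fin (m + 2)) (j : Fin m), (x : ℕ) = j → (x : ℕ) < t →
      (insertPair ht hb τ x : ℕ) = τ j := fun x j hxj hx =>
    (insertPair_val_eq_iff ht hb τ hxj hx (Or.inr ((lt_prefixSup τ (hxj ▸ hx)).trans_le h))).2 rfl
  apply le_antisymm
  · refine (prefixSup_le_iff _).2 fun x hx => ?_
    rw [hval x ⟨x, by omega⟩ rfl (by omega)]
    exact lt_prefixSup τ hx
  · refine (prefixSup_le_iff _).2 fun j hj => ?_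
    rw [← hval ⟨j, by omega⟩ j rfl (by simp; omega)]
    exact lt_prefixSup _ hj

lemma prefixSup_le_of_insertPair (h : prefixSup (insertPair ht hb τ) t ≤ b) :
    prefixSup τ t ≤ b := by
  refine (prefixSup_le_iff τ).2 fun j hj => ?_
  have := (prefixSup_le_iff _).1 h ⟨j, by omega⟩ hj
  rwa [insertPair_apply_of_lt ht hb τ rfl hj, skipPair_val_lt_iff] at this

end Insertion

lemma card_eq_of_insertPair {m t : ℕ} (ht : t ≤ m) (β : Perm (Fin m) → ℕ) (hβ : ∀ τ, β τ ≤ m)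
    (P : Perm (Fin m) → Prop) (Q : Perm (Fin (m + 2)) → Prop)
    (hPQ : ∀ τ, P τ → Q (insertPair ht (hβ τ) τ))
    (hQP : ∀ σ, Q σ → ∃ τ, P τ ∧ insertPair ht (hβ τ) τ = σ) :
    Nat.card {σ // Q σ} = Nat.card {τ // P τ} := by
  refine (Nat.card_eq_of_bijective (fun τ : {τ // P τ} => ⟨_, hPQ τ.1 τ.2⟩) ⟨?_, ?_⟩).symm
  · rintro ⟨τ, _⟩ ⟨τ', _⟩ h
    exact Subtype.ext (insertPair_inj ht _ τ (congrArg Subtype.val h)).2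
  · rintro ⟨σ, hσ⟩
    obtain ⟨τ, hτ, rfl⟩ := hQP σ hσ
    exact ⟨⟨τ, hτ⟩, rfl⟩

/-- Removing the descending pair of the rightmost event in `S` is a bijection onto the
permutations of `Fin (n - 2)` having the remaining events. -/
theorem card_forall_eq_factorial (E : ∀ m, ℕ → Perm (Fin m) → Prop) (d : ℕ)
    (β : ∀ m, ℕ → Perm (Fin m) → ℕ) (hβ : ∀ m j (τ : Perm (Fin m)), j + d ≤ m → β m j τ ≤ m)
    (insert_mem : ∀ m j τ (hj : j + d ≤ m), E (m + 2) j (insertPair hj (hβ m j τ hj) τ))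
    (insert_iff : ∀ m j s τ (hj : j + d ≤ m), s + 1 < j →
      (E (m + 2) s (insertPair hj (hβ m j τ hj) τ) ↔ E m s τ))
    (exists_insert : ∀ m j (hj : j + d ≤ m) (σ : Perm (Fin (m + 2))), E (m + 2) j σ →
      ∃ τ, insertPair hj (hβ m j τ hj) τ = σ)
    {n : ℕ} {S : Finset ℕ} (hS : ∀ j ∈ S, j + d + 2 ≤ n) (hS' : NoConsecutive S) :
    Nat.card {σ : Perm (Fin n) // ∀ j ∈ S, E n j σ} = (n - 2 * #S)! := by
  induction S using Finset.induction_on_max generalizing n with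
  | empty => simp [Fintype.card_perm]
  | insert a S haS ih =>
    obtain ⟨m, rfl⟩ : ∃ m, n = m + 2 := ⟨n - 2, by have := hS a (mem_insert_self a S); omega⟩
    have ha : a + d ≤ m := by have := hS a (mem_insert_self a S); omega
    have hgap : ∀ j ∈ S, j + 1 < a := fun j hj =>
      lt_of_le_of_ne (haS j hj) fun h => hS' j (mem_insert_of_mem hj) (h ▸ mem_insert_self a S)
    rw [card_eq_of_insertPair ha (β m a) (hβ m a · ha) (fun τ => ∀ j ∈ S, E m j τ), ih,
      card_insert_of_notMem fun h => (haS a h).false]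
    · congr 1
      omega
    · exact fun j hj => by have := hS j (mem_insert_of_mem hj); have := hgap j hj; omega
    · exact fun i hi hi' => hS' i (mem_insert_of_mem hi) (mem_insert_of_mem hi')
    · intro τ hτ j hj
      rcases mem_insert.1 hj with rfl | hj
      · exact insert_mem m j τ ha
      · exact (insert_iff m a j τ ha (hgap j hj)).2 (hτ j hj)
    · intro σ hσ
      obtain ⟨τ, rfl⟩ := exists_insert m a ha σ (hσ a (mem_insert_self a S))
      exact ⟨τ, fun j hj => (insert_iff m a j τ ha (hgap j hj)).1 (hσ j (mem_insert_of_mem hj)),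
        rfl⟩

variable {n : ℕ}

lemma isAdjCycle_two_iff (π : Perm (Fin n)) (i : ℕ) : IsAdjCycle 2 π i ↔ PairAt π i i := by
  constructor
  · rintro ⟨hi, hstep, hlast⟩
    exact ⟨⟨i, by omega⟩, ⟨i + 1, by omega⟩, rfl, rfl, hstep _ le_rfl (by simp),
      hlast ⟨i + 1, by omega⟩ rfl⟩
  · intro h
    have hi := h.succ_lt
    exact ⟨by omega, fun j hj hj' => (h.apply_of_eq (x := j) (by omega)).trans (by omega),
      fun j hj => h.apply_of_eq_succ (x := j) (by omega)⟩

lemma card_forall_pairAt_self {S : Finset ℕ} (hS : ∀ i ∈ S, i + 2 ≤ n) (hS' : NoConsecutive S) :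
    Nat.card {π : Perm (Fin n) // ∀ i ∈ S, PairAt π i i} = (n - 2 * #S)! :=
  card_forall_eq_factorial (fun _ i π => PairAt π i i) 0 (fun _ i _ => i) (fun _ _ _ h => h)
    (fun _ _ τ hj => pairAt_insertPair hj hj τ)
    (fun _ _ _ τ hj hs => pairAt_insertPair_iff hj hj τ hs (Or.inl hs))
    (fun _ _ hj _ hσ => exists_insertPair_eq hj hj hσ) hS hS'

lemma card_forall_not_isAdjCycle_two (n : ℕ) :
    (Nat.card {π : Perm (Fin n) // ∀ i, ¬ IsAdjCycle 2 π i} : ℤ) = pairSum n (n - 1) := by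
  have hiff : ∀ π : Perm (Fin n),
      (∀ i, ¬ IsAdjCycle 2 π i) ↔ ∀ i ∈ range (n - 1), ¬ PairAt π i i := fun π => by
    simp only [isAdjCycle_two_iff, mem_range]
    exact ⟨fun h i _ => h i, fun h i hi => h i (by have := hi.succ_lt; omega) hi⟩
  rw [Nat.card_congr (subtypeEquivRight hiff)]
  refine card_forall_not_eq_pairSum _ (fun S hS hS' => card_forall_pairAt_self (fun i hi => ?_) hS')
    fun i π h h' => ?_
  · have := mem_range.1 (hS hi)
    omega
  · obtain ⟨-, y, -, hy, -, hπy⟩ := h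
    have := h'.apply_of_eq hy
    omega

lemma occ132_cellsP_iff (σ : Perm (Fin n)) (i1 i2 i3 : Fin n) :
    Occ132 cellsP σ i1 i2 i3 ↔ i1 < i2 ∧ i2 < i3 ∧ σ i1 < σ i3 ∧ σ i3 < σ i2 ∧
      (∀ l, l < i2 → σ l < σ i3) ∧ (∀ l, ¬ (i2 < l ∧ l < i3)) ∧
      (∀ l, i3 < l → σ l < σ i1 ∨ σ i2 < σ l) := by
  have hinj : ∀ l l' : Fin n, (σ l : ℕ) = σ l' ↔ (l : ℕ) = l' := fun l l' => by
    rw [← Fin.ext_iff, ← Fin.ext_iff, σ.apply_eq_iff_eq]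
  simp only [Occ132, InReg132, cellsP, List.mem_cons, List.not_mem_nil, or_false,
    forall_eq_or_imp, forall_eq, Fin.lt_def, true_and, false_and, false_or, Nat.reduceEqDiff]
  constructor
  · rintro ⟨h12, h23, h13, h32, c02, c03, c12, c13, c20, c21, c22, c23, c31, c32⟩
    refine ⟨h12, h23, h13, h32, fun l hl => ?_, fun l hl => ?_, fun l hl => ?_⟩
    · have := hinj l i1; have := hinj l i2; have := hinj l i3
      have := c02 l; have := c03 l; have := c12 l; have := c13 l
      omega
    · have := hinj l i1; have := hinj l i2; have := hinj l i3
      have := c20 l; have := c21 l; have := c22 l; have := c23 l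
      omega
    · have := hinj l i1; have := hinj l i2; have := hinj l i3
      have := c31 l; have := c32 l
      omega
  · rintro ⟨h12, h23, h13, h32, hleft, hmid, hright⟩
    refine ⟨h12, h23, h13, h32, ?_⟩
    refine ⟨fun l => ?_, fun l => ?_, fun l => ?_, fun l => ?_, fun l => ?_, fun l => ?_,
      fun l => ?_, fun l => ?_, fun l => ?_, fun l => ?_⟩ <;>
    · have := hleft l; have := hmid l; have := hright l
      omega

def PrefixPairAt (σ : Perm (Fin n)) (t : ℕ) : Prop := PairAt σ t (prefixSup σ t)

lemma exists_occ132_cellsP_iff (σ : Perm (Fin n)) :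
    (∃ i1 i2 i3, Occ132 cellsP σ i1 i2 i3) ↔ ∃ j, PrefixPairAt σ (j + 1) := by
  have hinj : ∀ l l' : Fin n, (σ l : ℕ) = σ l' ↔ (l : ℕ) = l' := fun l l' => by
    rw [← Fin.ext_iff, ← Fin.ext_iff, σ.apply_eq_iff_eq]
  simp only [occ132_cellsP_iff, Fin.lt_def]
  constructor
  · rintro ⟨i1, i2, i3, h12, h23, h13, h32, hleft, hmid, hright⟩
    have hpos : ∀ l : Fin n, (σ i1 : ℕ) ≤ σ l → (σ l : ℕ) < σ i2 → (σ l : ℕ) ≠ σ i3 →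
        (l : ℕ) < i2 := fun l h1 h2 h3 => by
      have := hinj l i2; have := hinj l i3; have := hmid l; have := hright l
      omega
    have hi3 : (i3 : ℕ) = i2 + 1 := by
      by_contra h
      exact hmid ⟨i2 + 1, by omega⟩ ⟨Nat.lt_succ_self _, by simp only; omega⟩
    have hσ : (σ i2 : ℕ) = σ i3 + 1 := by
      by_contra h
      let l := σ.symm ⟨σ i3 + 1, by omega⟩
      have hl : (σ l : ℕ) = σ i3 + 1 := by simp [l]
      have := hleft l (hpos l (by omega) (by omega) (by omega))
      omega
    have hsup : prefixSup σ i2 = σ i3 := by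
      refine le_antisymm ((prefixSup_le_iff σ).2 hleft) ?_
      let l := σ.symm ⟨σ i3 - 1, by omega⟩
      have hl : (σ l : ℕ) = σ i3 - 1 := by simp [l]
      have := lt_prefixSup σ (hpos l (by omega) (by omega) (by omega))
      omega
    refine ⟨i2 - 1, i2, i3, by omega, by omega, ?_, ?_⟩ <;>
      rw [Nat.sub_add_cancel (by omega), hsup]
    exact hσ
  · rintro ⟨j, x, y, hx, hy, hσx, hσy⟩
    obtain ⟨i1, hi1, hsup⟩ := exists_prefixSup_eq σ (t := j + 1) (by omega) (by omega)
    refine ⟨i1, x, y, by omega, by omega, by omega, by omega, fun l hl => ?_, fun l => by omega,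
      fun l hl => ?_⟩
    · have := lt_prefixSup σ (hx ▸ hl)
      omega
    · have := hinj l i1; have := hinj l x; have := hinj l y
      omega

lemma avoid132_cellsP_iff (σ : Perm (Fin n)) :
    Avoid132 cellsP σ ↔ ∀ j ∈ range (n - 2), ¬ PrefixPairAt σ (j + 1) := by
  simp only [Avoid132, exists_occ132_cellsP_iff, not_exists, mem_range]
  exact ⟨fun h j _ => h j, fun h j hj => h j (by have := hj.succ_lt; omega) hj⟩

lemma card_forall_prefixPairAt {S : Finset ℕ} (hS : ∀ j ∈ S, j + 3 ≤ n)
    (hS' : NoConsecutive S) :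
    Nat.card {σ : Perm (Fin n) // ∀ j ∈ S, PrefixPairAt σ (j + 1)} = (n - 2 * #S)! := by
  refine card_forall_eq_factorial (fun _ j σ => PrefixPairAt σ (j + 1)) 1
    (fun _ j τ => prefixSup τ (j + 1)) (fun _ _ τ _ => prefixSup_le_card τ) ?_ ?_ ?_ hS hS'
  · intro m j τ hj
    rw [PrefixPairAt, prefixSup_insertPair hj _ τ le_rfl le_rfl]
    exact pairAt_insertPair hj _ τ
  · intro m j s τ hj hs
    rw [PrefixPairAt, PrefixPairAt, prefixSup_insertPair hj _ τ (by omega) le_rfl]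
    exact pairAt_insertPair_iff hj _ τ (by omega) (Or.inr le_rfl)
  · intro m j hj σ hσ
    have hb : prefixSup σ (j + 1) ≤ m := by have := hσ.add_two_le; omega
    obtain ⟨τ, hτ⟩ := exists_insertPair_eq hj hb hσ
    have hle := prefixSup_le_of_insertPair hj hb τ (by rw [hτ])
    have heq := prefixSup_insertPair hj hb τ le_rfl hle
    rw [hτ] at heq
    exact ⟨τ, by convert hτ using 2; exact heq.symm⟩

lemma card_avoid132_cellsP (n : ℕ) :
    (Nat.card {σ : Perm (Fin n) // Avoid132 cellsP σ} : ℤ) = pairSum n (n - 2) := by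
  rw [Nat.card_congr (subtypeEquivRight avoid132_cellsP_iff)]
  refine card_forall_not_eq_pairSum _
    (fun S hS hS' => card_forall_prefixPairAt (fun j hj => ?_) hS') fun j σ h h' => ?_
  · have := mem_range.1 (hS hj)
    omega
  · obtain ⟨x, y, hx, hy, hσx, hσy⟩ := h
    have := h'.apply_of_eq hy
    have := lt_prefixSup σ (x := x) (t := j + 1 + 1) (by omega)
    omega

end MeshPatternP

/-- For `n ≥ 2`, the number of permutations of `{1,…,n}` avoiding the mesh pattern `p`
equals `a₂(n,0) + a₂(n-2,0)`, where `a₂(m,0)` is the number of permutations of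
`{1,…,m}` with no adjacent transposition in their cycle decomposition. -/
theorem card_avoiders_p_eq (n : ℕ) (hn : 2 ≤ n) :
    Nat.card {σ : Equiv.Perm (Fin n) // Avoid132 cellsP σ} =
      Nat.card {π : Equiv.Perm (Fin n) // ∀ i : ℕ, ¬ IsAdjCycle 2 π i} +
      Nat.card {π : Equiv.Perm (Fin (n - 2)) // ∀ i : ℕ, ¬ IsAdjCycle 2 π i} := by
  have hrec := MeshPatternP.pairSum_succ n (n - 2)
  rw [show n - 2 + 1 = n - 1 by omega] at hrec
  have hZ : (Nat.card {σ : Equiv.Perm (Fin n) // Avoid132 cellsP σ} : ℤ) =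
      Nat.card {π : Equiv.Perm (Fin n) // ∀ i : ℕ, ¬ IsAdjCycle 2 π i} +
      Nat.card {π : Equiv.Perm (Fin (n - 2)) // ∀ i : ℕ, ¬ IsAdjCycle 2 π i} := by
    rw [MeshPatternP.card_avoid132_cellsP, MeshPatternP.card_forall_not_isAdjCycle_two,
      MeshPatternP.card_forall_not_isAdjCycle_two, hrec]
    ring
  exact_mod_cast hZ
end

section
/- The sequence a_2(n,0) (permutations of {1,...,n} with no adjacent transposition (i,i+1) in their cycle decomposition) satisfies a_2(n,0) = \sum_{j=0}^{\lfloor n/2 \rfloor} (-1)^j (n-j)!/j!. -/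
open Finset Equiv Equiv.Perm

namespace NoAdj


variable {n : ℕ}

def Sparse (T : Finset ℕ) : Prop := ∀ i ∈ T, i + 1 ∉ T

def Bdd (n : ℕ) (T : Finset ℕ) : Prop := ∀ i ∈ T, i + 2 ≤ n

def PairMem (T : Finset ℕ) (a : Fin n) : Prop := (a : ℕ) ∈ T ∨ (1 ≤ (a : ℕ) ∧ (a : ℕ) - 1 ∈ T)

instance (T : Finset ℕ) (a : Fin n) : Decidable (PairMem T a) := by unfold PairMem; infer_instance

def tauFun (T : Finset ℕ) (hb : Bdd n T) (a : Fin n) : Fin n :=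
  if h1 : (a : ℕ) ∈ T then ⟨(a : ℕ) + 1, by have := hb _ h1; omega⟩
  else if h2 : 1 ≤ (a : ℕ) ∧ (a : ℕ) - 1 ∈ T then ⟨(a : ℕ) - 1, by omega⟩ else a

lemma tauFun_of_mem (T : Finset ℕ) (hb : Bdd n T) (a : Fin n) (h : (a : ℕ) ∈ T) :
    (tauFun T hb a : ℕ) = (a : ℕ) + 1 := by simp [tauFun, h]

lemma tauFun_of_pred_mem (T : Finset ℕ) (hb : Bdd n T) (hs : Sparse T) (a : Fin n)
    (h1 : 1 ≤ (a : ℕ)) (h : (a : ℕ) - 1 ∈ T) : (tauFun T hb a : ℕ) = (a : ℕ) - 1 := by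
  have hna : (a : ℕ) ∉ T := by
    intro hmem
    have h2 := hs _ h
    have : (a : ℕ) - 1 + 1 = (a : ℕ) := by omega
    rw [this] at h2
    exact h2 hmem
  simp [tauFun, hna, h1, h]

lemma tauFun_of_not (T : Finset ℕ) (hb : Bdd n T) (a : Fin n) (h : ¬ PairMem T a) :
    tauFun T hb a = a := by
  unfold PairMem at h
  push_neg at h
  have : ¬ (1 ≤ (a : ℕ) ∧ (a : ℕ) - 1 ∈ T) := by
    rintro ⟨u, v⟩; exact (h.2 u) v
  simp [tauFun, h.1, this]

lemma tauFun_invol (T : Finset ℕ) (hb : Bdd n T) (hs : Sparse T) :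
    Function.Involutive (tauFun T hb) := by
  intro a
  by_cases h1 : (a : ℕ) ∈ T
  · have e1 : (tauFun T hb a : ℕ) = (a : ℕ) + 1 := tauFun_of_mem T hb a h1
    have e2 : (tauFun T hb (tauFun T hb a) : ℕ) = (tauFun T hb a : ℕ) - 1 := by
      apply tauFun_of_pred_mem T hb hs
      · omega
      · have h3 : (tauFun T hb a : ℕ) - 1 = (a : ℕ) := by omega
        rw [h3]; exact h1
    apply Fin.ext; omega
  · by_cases h2 : 1 ≤ (a : ℕ) ∧ (a : ℕ) - 1 ∈ T
    · have e1 : (tauFun T hb a : ℕ) = (a : ℕ) - 1 := tauFun_of_pred_mem T hb hs a h2.1 h2.2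
      have e2 : (tauFun T hb (tauFun T hb a) : ℕ) = (tauFun T hb a : ℕ) + 1 := by
        apply tauFun_of_mem
        have h3 : (tauFun T hb a : ℕ) = (a : ℕ) - 1 := e1
        rw [h3]; exact h2.2
      apply Fin.ext; omega
    · have e1 : tauFun T hb a = a := by
        apply tauFun_of_not
        unfold PairMem; tauto
      rw [e1, e1]

/-- the product of the transpositions indexed by `T`, as a permutation -/
def tau (T : Finset ℕ) (hb : Bdd n T) (hs : Sparse T) : Equiv.Perm (Fin n) :=
  (tauFun_invol T hb hs).toPerm

lemma tau_apply (T : Finset ℕ) (hb : Bdd n T) (hs : Sparse T) (a : Fin n) :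
    tau T hb hs a = tauFun T hb a := rfl





variable {n : ℕ}

def Cond (n : ℕ) (π : Equiv.Perm (Fin n)) (i : ℕ) : Prop :=
  i + 2 ≤ n ∧ (∀ j : Fin n, (j : ℕ) = i → ((π j : ℕ) = i + 1)) ∧
    (∀ j : Fin n, (j : ℕ) = i + 1 → ((π j : ℕ) = i))

instance (n : ℕ) (π : Equiv.Perm (Fin n)) (i : ℕ) : Decidable (Cond n π i) := by
  unfold Cond; infer_instance

lemma cond_iff_fix (T : Finset ℕ) (hb : Bdd n T) (hs : Sparse T) (π : Equiv.Perm (Fin n)) :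
    (∀ i ∈ T, Cond n π i) ↔ ∀ a : Fin n, PairMem T a → tau T hb hs (π a) = a := by
  constructor
  · intro hC a hpa
    rcases hpa with ha | ⟨ha1, ha2⟩
    · have hπ : (π a : ℕ) = (a : ℕ) + 1 := (hC _ ha).2.1 a rfl
      have h1 : (tau T hb hs (π a) : ℕ) = (π a : ℕ) - 1 := by
        apply tauFun_of_pred_mem T hb hs
        · omega
        · have : (π a : ℕ) - 1 = (a : ℕ) := by omega
          rw [this]; exact ha
      apply Fin.ext; omega
    · have hπ : (π a : ℕ) = (a : ℕ) - 1 := (hC _ ha2).2.2 a (by omega)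
      have h1 : (tau T hb hs (π a) : ℕ) = (π a : ℕ) + 1 :=
        tauFun_of_mem T hb (π a) (by rw [hπ]; exact ha2)
      apply Fin.ext; omega
  · intro hf i hi
    have key : ∀ a : Fin n, PairMem T a → π a = tau T hb hs a := by
      intro a hpa
      have h1 := hf a hpa
      have h2 : tau T hb hs (tau T hb hs (π a)) = π a := tauFun_invol T hb hs (π a)
      rw [h1] at h2
      exact h2.symm
    refine ⟨hb _ hi, fun j hj => ?_, fun j hj => ?_⟩
    · have hp : PairMem T j := Or.inl (by rw [hj]; exact hi)
      rw [key j hp, tau_apply, tauFun_of_mem T hb j (by rw [hj]; exact hi), hj]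
    · have hp : PairMem T j := Or.inr ⟨by omega, by have : (j:ℕ) - 1 = i := by omega
                                                    rw [this]; exact hi⟩
      have := tauFun_of_pred_mem T hb hs j (by omega)
        (by have : (j:ℕ) - 1 = i := by omega
            rw [this]; exact hi)
      rw [key j hp, tau_apply]; omega

lemma card_pairMem (T : Finset ℕ) (hb : Bdd n T) (hs : Sparse T) :
    Fintype.card {a : Fin n // PairMem T a} = 2 * T.card := by
  rw [Fintype.card_subtype]
  have hU : ∀ b ∈ T ∪ T.image (· + 1), b < n := by
    intro b hbm
    rcases Finset.mem_union.1 hbm with h | h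
    · have := hb _ h; omega
    · obtain ⟨x, hx, rfl⟩ := Finset.mem_image.1 h
      have := hb _ hx; omega
  have key : (Finset.univ.filter (fun a : Fin n => PairMem T a)).card
      = (T ∪ T.image (· + 1)).card := by
    refine Finset.card_bij' (fun (a : Fin n) _ => (a : ℕ)) (fun b hbm => (⟨b, hU b hbm⟩ : Fin n)) ?_ ?_ ?_ ?_
    · intro a ha
      have hpa : PairMem T a := by simpa using ha
      rcases hpa with h | ⟨h1, h2⟩
      · exact Finset.mem_union_left _ h
      · exact Finset.mem_union_right _ (Finset.mem_image.2 ⟨(a:ℕ)-1, h2,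
          by show (a:ℕ) - 1 + 1 = (a:ℕ); omega⟩)
    · intro b hbm
      simp only [Finset.mem_filter, Finset.mem_univ, true_and]
      show b ∈ T ∨ (1 ≤ b ∧ b - 1 ∈ T)
      rcases Finset.mem_union.1 hbm with h | h
      · exact Or.inl h
      · obtain ⟨x, hx, rfl⟩ := Finset.mem_image.1 h
        exact Or.inr ⟨by omega, by simpa using hx⟩
    · intro a ha; rfl
    · intro b hbm; rfl
  rw [key, Finset.card_union_of_disjoint, Finset.card_image_of_injective _
      (add_left_injective 1), two_mul]
  rw [Finset.disjoint_left]
  intro x hx hximg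
  obtain ⟨y, hy, rfl⟩ := Finset.mem_image.1 hximg
  exact hs _ hy hx

lemma card_fixing (T : Finset ℕ) (hb : Bdd n T) (hs : Sparse T) :
    Fintype.card {π : Equiv.Perm (Fin n) // ∀ i ∈ T, Cond n π i}
      = (n - 2 * T.card).factorial := by
  classical
  have e1 : {π : Equiv.Perm (Fin n) // ∀ i ∈ T, Cond n π i}
      ≃ {f : Equiv.Perm (Fin n) // ∀ a : Fin n, PairMem T a → f a = a} :=
    Equiv.subtypeEquiv (Equiv.mulLeft (tau T hb hs)) (fun π => by
      rw [cond_iff_fix T hb hs π]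
      constructor <;> intro h a ha <;> have h2 := h a ha <;>
        simpa [Equiv.Perm.mul_apply] using h2)
  have e2 : Equiv.Perm {a : Fin n // ¬ PairMem T a}
      ≃ {f : Equiv.Perm (Fin n) // ∀ a : Fin n, PairMem T a → f a = a} :=
    (Equiv.Perm.subtypeEquivSubtypePerm (fun a => ¬ PairMem T a)).trans
      (Equiv.subtypeEquivRight (fun f => by
        constructor <;> intro h a ha <;> exact h a (by simpa using ha)))
  rw [Fintype.card_congr (e1.trans e2.symm), Fintype.card_perm]
  congr 1
  rw [Fintype.card_subtype_compl, Fintype.card_fin, card_pairMem T hb hs]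




instance (T : Finset ℕ) : Decidable (Sparse T) := by unfold Sparse; infer_instance

instance (n : ℕ) (T : Finset ℕ) : Decidable (Bdd n T) := by unfold Bdd; infer_instance

lemma sparse_count (m : ℕ) : ∀ j : ℕ,
    (((Finset.range m).powerset.filter (fun T => Sparse T ∧ T.card = j)).card)
      = (m + 1 - j).choose j := by
  induction m using Nat.strong_induction_on with
  | _ m IH =>
    intro j
    by_cases hj0 : j = 0
    · subst hj0
      have h : (Finset.range m).powerset.filter (fun T => Sparse T ∧ T.card = 0) = {∅} := by
        ext T
        simp only [Finset.mem_filter, Finset.mem_powerset, Finset.mem_singleton,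
          Finset.card_eq_zero]
        constructor
        · rintro ⟨-, -, h⟩; exact h
        · rintro rfl
          exact ⟨Finset.empty_subset _, fun i hi => absurd hi (Finset.notMem_empty i), rfl⟩
      rw [h]; simp
    by_cases hjm : m < j
    · have h : (Finset.range m).powerset.filter (fun T => Sparse T ∧ T.card = j) = ∅ := by
        rw [Finset.filter_eq_empty_iff]
        rintro T hT ⟨-, hc⟩
        have := Finset.card_le_card (Finset.mem_powerset.1 hT)
        rw [Finset.card_range] at this
        omega
      rw [h, Finset.card_empty, Nat.choose_eq_zero_of_lt (by omega)]
    -- now 1 ≤ j ≤ m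
    match m, hjm with
    | 0, hh => omega
    | 1, _ =>
      have hj1 : j = 1 := by omega
      subst hj1
      decide
    | (m' + 2), _ =>
      -- split on membership of m' + 1
      have hsplit := Finset.card_filter_add_card_filter_not
        (s := (Finset.range (m' + 2)).powerset.filter (fun T => Sparse T ∧ T.card = j))
        (p := fun T => m' + 1 ∈ T)
      have hA : (((Finset.range (m' + 2)).powerset.filter (fun T => Sparse T ∧ T.card = j)).filter
          (fun T => ¬ (fun T => m' + 1 ∈ T) T))
          = (Finset.range (m' + 1)).powerset.filter (fun T => Sparse T ∧ T.card = j) := by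
        ext T
        simp only [Finset.mem_filter, Finset.mem_powerset]
        constructor
        · rintro ⟨⟨hsub, hP⟩, hnot⟩
          refine ⟨fun x hx => ?_, hP⟩
          have h1 := hsub hx
          simp only [Finset.mem_range] at h1 ⊢
          rcases Nat.lt_or_ge x (m' + 1) with h | h
          · exact h
          · exfalso; have : x = m' + 1 := by omega
            subst this; exact hnot hx
        · rintro ⟨hsub, hP⟩
          refine ⟨⟨fun x hx => ?_, hP⟩, fun hmem => ?_⟩
          · have := hsub hx; simp only [Finset.mem_range] at this ⊢; omega
          · have := hsub hmem; simp only [Finset.mem_range] at this; omega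
      have hB : (((Finset.range (m' + 2)).powerset.filter (fun T => Sparse T ∧ T.card = j)).filter
          (fun T => m' + 1 ∈ T)).card
          = ((Finset.range m').powerset.filter (fun T => Sparse T ∧ T.card = j - 1)).card := by
        refine Finset.card_bij' (fun T _ => T.erase (m' + 1))
          (fun T _ => insert (m' + 1) T) ?_ ?_ ?_ ?_
        · rintro T hT
          simp only [Finset.mem_filter, Finset.mem_powerset] at hT
          obtain ⟨⟨hsub, hSp, hcard⟩, hmem⟩ := hT
          simp only [Finset.mem_filter, Finset.mem_powerset]
          refine ⟨fun x hx => ?_, fun i hi => ?_, ?_⟩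
          · rw [Finset.mem_erase] at hx
            have := hsub hx.2
            simp only [Finset.mem_range] at this ⊢
            rcases Nat.lt_or_ge x m' with h | h
            · exact h
            · exfalso
              have hxm : x = m' := by omega
              subst hxm
              exact hSp _ hx.2 hmem
          · rw [Finset.mem_erase] at hi
            intro hmem2
            exact hSp _ hi.2 (Finset.mem_of_mem_erase hmem2)
          · rw [Finset.card_erase_of_mem hmem, hcard]
        · rintro T hT
          simp only [Finset.mem_filter, Finset.mem_powerset] at hT
          obtain ⟨hsub, hSp, hcard⟩ := hT
          have hnm : m' + 1 ∉ T := by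
            intro h; have := hsub h; simp only [Finset.mem_range] at this; omega
          simp only [Finset.mem_filter, Finset.mem_powerset, Finset.mem_insert]
          refine ⟨⟨fun x hx => ?_, fun i hi => ?_, ?_⟩, by simp⟩
          · rcases Finset.mem_insert.1 hx with rfl | hx
            · simp only [Finset.mem_range]; omega
            · have := hsub hx; simp only [Finset.mem_range] at this ⊢; omega
          · rcases Finset.mem_insert.1 hi with rfl | hi
            · intro h
              rcases Finset.mem_insert.1 h with h | h
              · omega
              · have := hsub h; simp only [Finset.mem_range] at this; omega
            · intro h
              rcases Finset.mem_insert.1 h with h | h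
              · have := hsub hi; simp only [Finset.mem_range] at this; omega
              · exact hSp _ hi h
          · rw [Finset.card_insert_of_notMem hnm, hcard]; omega
        · rintro T hT
          simp only [Finset.mem_filter] at hT
          exact Finset.insert_erase hT.2
        · rintro T hT
          simp only [Finset.mem_filter, Finset.mem_powerset] at hT
          apply Finset.erase_insert
          intro h; have := hT.1 h; simp only [Finset.mem_range] at this; omega
      have hIH1 := IH (m' + 1) (by omega) j
      have hIH2 := IH m' (by omega) (j - 1)
      rw [hA, hIH1] at hsplit
      rw [hB, hIH2] at hsplit
      rw [← hsplit]
      have h1 : m' + 1 + 1 - j = m' + 2 - j := by omega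
      have h2 : m' + 1 - (j - 1) = m' + 2 - j := by omega
      have h3 : m' + 2 + 1 - j = (m' + 2 - j) + 1 := by omega
      rw [h1, h2, h3]
      obtain ⟨j', rfl⟩ : ∃ j', j = j' + 1 := ⟨j - 1, by omega⟩
      rw [Nat.choose_succ_succ (m' + 2 - (j' + 1)) j']
      have h4 : j' + 1 - 1 = j' := by omega
      rw [h4]


end NoAdj
namespace NoAdj

lemma isAdjCycle_iff_cond {n : ℕ} (π : Equiv.Perm (Fin n)) (i : ℕ) :
    IsAdjCycle 2 π i ↔ Cond n π i := by
  unfold IsAdjCycle Cond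
  constructor
  · rintro ⟨h1, h2, h3⟩
    refine ⟨h1, fun j hj => ?_, fun j hj => ?_⟩
    · have := h2 j (by omega) (by omega); omega
    · exact h3 j (by omega)
  · rintro ⟨h1, h2, h3⟩
    refine ⟨h1, fun j hj1 hj2 => ?_, fun j hj => ?_⟩
    · have : (j : ℕ) = i := by omega
      have := h2 j this; omega
    · exact h3 j (by omega)

variable {n : ℕ}

/-- the set of adjacent transposition positions of `π` -/
def Sp (n : ℕ) (π : Equiv.Perm (Fin n)) : Finset ℕ :=
  (Finset.range n).filter (fun i => Cond n π i)

lemma subset_sp_iff (T : Finset ℕ) (π : Equiv.Perm (Fin n)) :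
    T ⊆ Sp n π ↔ ∀ i ∈ T, Cond n π i := by
  constructor
  · intro h i hi
    exact (Finset.mem_filter.1 (h hi)).2
  · intro h i hi
    exact Finset.mem_filter.2 ⟨Finset.mem_range.2 (by have := (h i hi).1; omega), h i hi⟩

lemma card_subset_sp (T : Finset ℕ) :
    ((Finset.univ.filter (fun π : Equiv.Perm (Fin n) => T ⊆ Sp n π)).card : ℚ)
      = if Bdd n T ∧ Sparse T then ((n - 2 * T.card).factorial : ℚ) else 0 := by
  classical
  have hcongr : (Finset.univ.filter (fun π : Equiv.Perm (Fin n) => T ⊆ Sp n π))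
      = (Finset.univ.filter (fun π : Equiv.Perm (Fin n) => ∀ i ∈ T, Cond n π i)) := by
    apply Finset.filter_congr
    intro π _
    exact subset_sp_iff T π
  rw [hcongr]
  by_cases hgood : Bdd n T ∧ Sparse T
  · rw [if_pos hgood, ← card_fixing T hgood.1 hgood.2, Fintype.card_subtype]
  · rw [if_neg hgood]
    norm_cast
    rw [Finset.card_eq_zero, Finset.filter_eq_empty_iff]
    intro π _
    intro hall
    rw [not_and_or] at hgood
    rcases hgood with hb | hs
    · unfold Bdd at hb
      push_neg at hb
      obtain ⟨i, hi, hlt⟩ := hb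
      exact absurd (hall i hi).1 (by omega)
    · unfold Sparse at hs
      push_neg at hs
      obtain ⟨i, hi, hi1⟩ := hs
      have h2n : i + 2 ≤ n := (hall i hi).1
      have c1 := (hall i hi).2.2 ⟨i + 1, by omega⟩ (by simp)
      have c2 := (hall (i + 1) hi1).2.1 ⟨i + 1, by omega⟩ (by simp)
      omega

theorem main (n : ℕ) :
    ((Nat.card {π : Equiv.Perm (Fin n) // ∀ i : ℕ, ¬ IsAdjCycle 2 π i}) : ℚ) =
      ∑ j ∈ Finset.range (n / 2 + 1),
        (-1 : ℚ) ^ j * (Nat.factorial (n - j)) / (Nat.factorial j) := by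
  classical
  have h0 : Nat.card {π : Equiv.Perm (Fin n) // ∀ i : ℕ, ¬ IsAdjCycle 2 π i}
      = (Finset.univ.filter
          (fun π : Equiv.Perm (Fin n) => ∀ i : ℕ, ¬ IsAdjCycle 2 π i)).card := by
    rw [Nat.card_eq_fintype_card, Fintype.card_subtype]
  rw [h0]
  have h1 : (Finset.univ.filter (fun π : Equiv.Perm (Fin n) => ∀ i : ℕ, ¬ IsAdjCycle 2 π i))
      = (Finset.univ.filter (fun π : Equiv.Perm (Fin n) => Sp n π = ∅)) := by
    apply Finset.filter_congr
    intro π _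
    simp only [Sp, Finset.filter_eq_empty_iff, Finset.mem_range]
    constructor
    · intro h i _
      rw [← isAdjCycle_iff_cond]
      exact h i
    · intro h i
      rw [isAdjCycle_iff_cond]
      intro hc
      have hin : i < n := by have := hc.1; omega
      exact h hin hc
  rw [h1]
  -- turn the card into a sum of indicators, then inclusion–exclusion
  have h2 : ((Finset.univ.filter (fun π : Equiv.Perm (Fin n) => Sp n π = ∅)).card : ℚ)
      = ∑ π : Equiv.Perm (Fin n), ∑ T ∈ (Finset.range n).powerset,
          (if T ⊆ Sp n π then (-1 : ℚ) ^ T.card else 0) := by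
    rw [Finset.card_filter]
    push_cast
    apply Finset.sum_congr rfl
    intro π _
    have hpow : (Sp n π).powerset = ((Finset.range n).powerset).filter (fun T => T ⊆ Sp n π) := by
      ext T
      simp only [Finset.mem_powerset, Finset.mem_filter]
      constructor
      · intro h
        exact ⟨h.trans (Finset.filter_subset _ _), h⟩
      · exact fun h => h.2
    have hie : (if Sp n π = ∅ then (1 : ℚ) else 0)
        = ∑ T ∈ (Sp n π).powerset, (-1 : ℚ) ^ T.card := by
      have := Finset.sum_powerset_neg_one_pow_card (x := Sp n π)
      have hcast : ((∑ m ∈ (Sp n π).powerset, (-1 : ℤ) ^ m.card : ℤ) : ℚ)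
          = ∑ m ∈ (Sp n π).powerset, (-1 : ℚ) ^ m.card := by push_cast; rfl
      rw [this] at hcast
      rw [← hcast]
      split <;> simp
    rw [← Finset.sum_filter, ← hpow, ← hie]
  rw [h2, Finset.sum_comm]
  have h3 : ∀ T ∈ (Finset.range n).powerset,
      (∑ π : Equiv.Perm (Fin n), if T ⊆ Sp n π then (-1 : ℚ) ^ T.card else 0)
        = if Bdd n T ∧ Sparse T then (-1 : ℚ) ^ T.card * ((n - 2 * T.card).factorial : ℚ)
          else 0 := by
    intro T _
    rw [← Finset.sum_filter, Finset.sum_const, nsmul_eq_mul, mul_comm, card_subset_sp T]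
    split <;> simp
  rw [Finset.sum_congr rfl h3, ← Finset.sum_filter]
  -- group by cardinality
  have h4 : ∀ T ∈ ((Finset.range n).powerset).filter (fun T => Bdd n T ∧ Sparse T),
      T.card ∈ Finset.range (n / 2 + 1) := by
    intro T hT
    simp only [Finset.mem_filter, Finset.mem_powerset] at hT
    have := Fintype.card_subtype_le (fun a : Fin n => PairMem T a)
    rw [card_pairMem T hT.2.1 hT.2.2, Fintype.card_fin] at this
    simp only [Finset.mem_range]
    omega
  rw [← Finset.sum_fiberwise_of_maps_to h4
    (fun T => (-1 : ℚ) ^ T.card * ((n - 2 * T.card).factorial : ℚ))]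
  apply Finset.sum_congr rfl
  intro j hj
  have hcount : (((Finset.range n).powerset.filter (fun T => Bdd n T ∧ Sparse T)).filter
      (fun T => T.card = j)).card = (n - 1 + 1 - j).choose j := by
    rw [Finset.filter_filter, ← sparse_count (n - 1) j]
    congr 1
    ext T
    simp only [Finset.mem_filter, Finset.mem_powerset]
    constructor
    · rintro ⟨hsub, ⟨hb, hs⟩, hc⟩
      refine ⟨fun x hx => ?_, hs, hc⟩
      have := hb x hx
      simp only [Finset.mem_range]
      omega
    · rintro ⟨hsub, hs, hc⟩
      have hb : Bdd n T := by
        intro x hx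
        have := hsub hx
        simp only [Finset.mem_range] at this
        omega
      refine ⟨fun x hx => ?_, ⟨hb, hs⟩, hc⟩
      have := hb x hx
      simp only [Finset.mem_range]
      omega
  have hsum : ∑ T ∈ (((Finset.range n).powerset.filter (fun T => Bdd n T ∧ Sparse T)).filter
      (fun T => T.card = j)), (-1 : ℚ) ^ T.card * ((n - 2 * T.card).factorial : ℚ)
      = ((n - 1 + 1 - j).choose j : ℚ) * ((-1 : ℚ) ^ j * ((n - 2 * j).factorial : ℚ)) := by
    rw [Finset.sum_congr rfl (fun T hT => ?_), Finset.sum_const, hcount, nsmul_eq_mul]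
    have : T.card = j := (Finset.mem_filter.1 hT).2
    rw [this]
  rw [hsum]
  -- final arithmetic
  have hjle : j ≤ n / 2 := by
    simp only [Finset.mem_range] at hj
    omega
  have hkey : (n - 1 + 1 - j).choose j * (n - 2 * j).factorial * j.factorial
      = (n - j).factorial := by
    rcases Nat.eq_zero_or_pos n with rfl | hn
    · have : j = 0 := by omega
      subst this
      simp
    · have he : n - 1 + 1 - j = n - j := by omega
      rw [he]
      have h2 : n - j - j = n - 2 * j := by omega
      rw [← h2]
      have := Nat.choose_mul_factorial_mul_factorial (n := n - j) (k := j) (by omega)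
      calc (n - j).choose j * (n - j - j).factorial * j.factorial
          = (n - j).choose j * j.factorial * (n - j - j).factorial := by ring
        _ = (n - j).factorial := this
  have hq : ((n - j).factorial : ℚ)
      = ((n - 1 + 1 - j).choose j : ℚ) * ((n - 2 * j).factorial : ℚ) * (j.factorial : ℚ) := by
    exact_mod_cast hkey.symm
  rw [mul_div_assoc, hq]
  have hjf : (j.factorial : ℚ) ≠ 0 := by
    exact_mod_cast j.factorial_ne_zero
  field_simp

end NoAdj

/-- The number of permutations of `{1,…,n}` with no adjacent transposition in their
cycle decomposition equals `∑_{j=0}^{⌊n/2⌋} (-1)^j (n-j)!/j!`. -/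
theorem card_no_adjacent_transpositions (n : ℕ) :
    ((Nat.card {π : Equiv.Perm (Fin n) // ∀ i : ℕ, ¬ IsAdjCycle 2 π i}) : ℚ) =
      ∑ j ∈ Finset.range (n / 2 + 1),
        (-1 : ℚ) ^ j * (Nat.factorial (n - j)) / (Nat.factorial j) := by
  exact NoAdj.main n
end
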